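/- Let p : X̃ → X be a nontrivial harmonic G-cover with abelian Galois group G. The collection of subsets {F ⊆ E(X) : every connected component of X∖F is G-nontrivial} forms the independent sets of a matroid M*(X̃/X) on ground set E(X), and the rank of this matroid equals g(X) − 1 + |{v ∈ V(X) : D(v) ≠ 0}|, where g(X) is the genus of X and D(v) is the dilation subgroup at v. -/

import Mathlib

set_option autoImplicit false
set_option maxHeartbeats 1000000

/-- A graph in the sense of Serre: a finite set of vertices, a finite set of
half-edges with a fixed-point-free involution, and a root map. -/
structure SerreGraph where
  V : Type
  H : Type
  fintypeV : Fintype V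
  fintypeH : Fintype H
  decEqV : DecidableEq V
  decEqH : DecidableEq H
  inv : H → H
  inv_inv : ∀ h, inv (inv h) = h
  inv_ne : ∀ h, inv h ≠ h
  root : H → V

attribute [instance] SerreGraph.fintypeV SerreGraph.fintypeH SerreGraph.decEqV SerreGraph.decEqH

namespace SerreGraph

/-- Edges are orbits `{h, inv h}` of the involution. -/
def Edge (X : SerreGraph) : Type := Quot (fun h h' : X.H => h' = X.inv h)

/-- The edge underlying a half-edge. -/
def edgeOf (X : SerreGraph) (h : X.H) : X.Edge := Quot.mk _ h

lemma edgeOf_surjective (X : SerreGraph) : Function.Surjective X.edgeOf :=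
  fun e => Quot.exists_rep e

lemma edgeOf_inv (X : SerreGraph) (h : X.H) : X.edgeOf (X.inv h) = X.edgeOf h :=
  Quot.sound (X.inv_inv h).symm

instance (X : SerreGraph) : Finite X.Edge := Quot.finite _
noncomputable instance (X : SerreGraph) : Fintype X.Edge := Fintype.ofFinite _
noncomputable instance (X : SerreGraph) : DecidableEq X.Edge := Classical.decEq _

/-- One step of adjacency in the graph obtained by deleting the edges in `F`. -/
def adjStep (X : SerreGraph) (F : Finset X.Edge) (u v : X.V) : Prop :=
  ∃ h : X.H, X.root h = u ∧ X.root (X.inv h) = v ∧ X.edgeOf h ∉ F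

/-- `u` and `v` lie in the same connected component of `X ∖ F`. -/
def compRel (X : SerreGraph) (F : Finset X.Edge) (u v : X.V) : Prop :=
  Relation.ReflTransGen (X.adjStep F) u v

/-- A graph is connected if it is nonempty and any two vertices are joined by a path. -/
def Connected (X : SerreGraph) : Prop :=
  Nonempty X.V ∧ ∀ u v : X.V, X.compRel ∅ u v

/-- The vertex set of the connected component of `v` in `X ∖ F`. -/
noncomputable def compVerts (X : SerreGraph) (F : Finset X.Edge) (v : X.V) : Finset X.V :=
  (Set.toFinite {u | X.compRel F v u}).toFinset

/-- The set of connected components (as vertex sets) of `X ∖ F`. -/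
noncomputable def components (X : SerreGraph) (F : Finset X.Edge) : Finset (Finset X.V) :=
  Finset.univ.image (X.compVerts F)

/-- The edges of `X ∖ F` belonging to a component with vertex set `C`. -/
noncomputable def edgesIn (X : SerreGraph) (F : Finset X.Edge) (C : Finset X.V) :
    Finset X.Edge :=
  (Set.toFinite {e | e ∉ F ∧ ∃ h, X.edgeOf h = e ∧ X.root h ∈ C}).toFinset

/-- A spanning tree: a spanning-connected set of edges of cardinality `|V| - 1`. -/
def IsSpanningTree (X : SerreGraph) (T : Finset X.Edge) : Prop :=
  (∀ u v : X.V, Relation.ReflTransGen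
      (fun a b => ∃ h, X.root h = a ∧ X.root (X.inv h) = b ∧ X.edgeOf h ∈ T) u v) ∧
  T.card + 1 = Fintype.card X.V

noncomputable def spanningTrees (X : SerreGraph) : Finset (Finset X.Edge) :=
  (Set.toFinite {T | X.IsSpanningTree T}).toFinset

/-- The number of spanning trees of `X`; by Kirchhoff's theorem this is `|Jac(X)|`. -/
noncomputable def numSpanningTrees (X : SerreGraph) : ℕ := X.spanningTrees.card

/-- The genus `g(X) = |E(X)| - |V(X)| + 1` of a (connected) graph. -/
noncomputable def genus (X : SerreGraph) : ℕ :=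
  Fintype.card X.Edge + 1 - Fintype.card X.V

/-- The Jacobian polynomial `J_X = ∑_T ∏_{e ∉ T} x_e`, summed over spanning trees. -/
noncomputable def jacobianPoly (X : SerreGraph) (R : Type) [CommRing R] :
    MvPolynomial X.Edge R :=
  ∑ T ∈ X.spanningTrees, ∏ e ∈ Tᶜ, MvPolynomial.X e

/-- A closed path: a nonempty list of half-edges, consecutively matched head-to-tail,
including from the last one back to the first. -/
def IsClosedPath (X : SerreGraph) (l : List X.H) : Prop :=
  l ≠ [] ∧ List.Chain' (fun a b => X.root (X.inv a) = X.root b) (l ++ l.take 1)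

/-- A cycle with pairwise distinct edges, all belonging to `S`. -/
def IsEdgeCycle (X : SerreGraph) (S : Finset X.Edge) (l : List X.H) : Prop :=
  X.IsClosedPath l ∧ (∀ h ∈ l, X.edgeOf h ∈ S) ∧ (l.map X.edgeOf).Nodup

/-- An edge is a loop if its two root vertices coincide. -/
def IsLoop (X : SerreGraph) (e : X.Edge) : Prop :=
  ∃ h, X.edgeOf h = e ∧ X.root h = X.root (X.inv h)

/-- An orientation: a choice of half-edge (source half) for every edge. -/
structure Orientation (X : SerreGraph) where
  pick : X.Edge → X.H
  pick_spec : ∀ e, X.edgeOf (pick e) = e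

/-- The voltage of a half-edge: `η(e)` if it is traversed in the chosen orientation,
`η(e)⁻¹` otherwise. -/
def halfVoltage {G : Type} [Group G] (X : SerreGraph) (o : X.Orientation)
    (η : X.Edge → G) (h : X.H) : G :=
  if h = o.pick (X.edgeOf h) then η (X.edgeOf h) else (η (X.edgeOf h))⁻¹

/-- The (Frobenius) voltage of a path of half-edges. -/
def pathVoltage {G : Type} [Group G] (X : SerreGraph) (o : X.Orientation)
    (η : X.Edge → G) (l : List X.H) : G :=
  (l.map (X.halfVoltage o η)).prod

/-- A morphism of Serre graphs. -/
structure Hom (X Y : SerreGraph) where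
  vMap : X.V → Y.V
  hMap : X.H → Y.H
  hMap_inv : ∀ h, hMap (X.inv h) = Y.inv (hMap h)
  root_hMap : ∀ h, Y.root (hMap h) = vMap (X.root h)

/-- The induced map on edges. -/
def Hom.edgeMap {X Y : SerreGraph} (f : Hom X Y) : X.Edge → Y.Edge :=
  Quot.map f.hMap (fun a b hab => by rw [hab, f.hMap_inv])

/-- A morphism is harmonic with local degree function `d` if for every vertex `v`
upstairs and every half-edge `h` rooted at its image, `d v` is the number of
half-edges at `v` mapping to `h`. -/
structure IsHarmonic {X Y : SerreGraph} (f : Hom X Y) (d : X.V → ℕ) : Prop where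
  pos : ∀ v, 0 < d v
  balanced : ∀ (v : X.V) (h : Y.H), Y.root h = f.vMap v →
    d v = Nat.card {h' : X.H // X.root h' = v ∧ f.hMap h' = h}

/-- A harmonic Galois cover with Galois group `G`: a harmonic morphism of degree `|G|`
together with an equivariant `G`-action that is transitive on vertex fibers and simply
transitive on edge fibers. -/
structure GCover (G : Type) [Group G] [Fintype G] (Xt X : SerreGraph)
    extends Hom Xt X where
  d : Xt.V → ℕ
  harm : IsHarmonic toHom d
  deg_eq : ∀ v : X.V,
    ∑ w ∈ Finset.univ.filter (fun w => toHom.vMap w = v), d w = Fintype.card G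
  smulV : G → Xt.V → Xt.V
  smulH : G → Xt.H → Xt.H
  one_smulV : ∀ w, smulV 1 w = w
  mul_smulV : ∀ g g' w, smulV (g * g') w = smulV g (smulV g' w)
  one_smulH : ∀ h, smulH 1 h = h
  mul_smulH : ∀ g g' h, smulH (g * g') h = smulH g (smulH g' h)
  smulH_inv : ∀ g h, smulH g (Xt.inv h) = Xt.inv (smulH g h)
  root_smulH : ∀ g h, Xt.root (smulH g h) = smulV g (Xt.root h)
  vMap_smulV : ∀ g w, toHom.vMap (smulV g w) = toHom.vMap w
  hMap_smulH : ∀ g h, toHom.hMap (smulH g h) = toHom.hMap h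
  d_smulV : ∀ g w, d (smulV g w) = d w
  vertex_trans : ∀ w w' : Xt.V, toHom.vMap w = toHom.vMap w' → ∃ g, smulV g w = w'
  edge_trans : ∀ ht ht' : Xt.H,
    (toHom.hMap ht' = toHom.hMap ht ∨ toHom.hMap ht' = X.inv (toHom.hMap ht)) →
    ∃ g, smulH g ht = ht' ∨ smulH g ht = Xt.inv ht'
  edge_free : ∀ (g : G) (ht : Xt.H),
    (smulH g ht = ht ∨ smulH g ht = Xt.inv ht) → g = 1

namespace GCover

variable {G : Type} [Group G] [Fintype G] {Xt X : SerreGraph}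

/-- The cover is free if all local degrees are one. -/
def IsFree (c : GCover G Xt X) : Prop := ∀ w, c.d w = 1

/-- The dilation subgroup of a vertex: the common stabilizer of the vertices in its fiber. -/
def dilation (c : GCover G Xt X) (v : X.V) : Set G :=
  {g | ∀ w : Xt.V, c.vMap w = v → c.smulV g w = w}

/-- One step of adjacency upstairs, through half-edges lying over `X ∖ F`. -/
def liftStep (c : GCover G Xt X) (F : Finset X.Edge) (a b : Xt.V) : Prop :=
  ∃ ht : Xt.H, Xt.root ht = a ∧ Xt.root (Xt.inv ht) = b ∧ X.edgeOf (c.hMap ht) ∉ F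

/-- The number of connected components of the preimage of the component of `v` in `X ∖ F`. -/
noncomputable def numLiftComponents (c : GCover G Xt X) (F : Finset X.Edge) (v : X.V) : ℕ :=
  Nat.card (Quot (fun a b : {w : Xt.V // X.compRel F v (c.vMap w)} => c.liftStep F a.1 b.1))

/-- The connected component of `v` in `X ∖ F` is `G`-nontrivial, i.e. the restriction of the
cover over it is not isomorphic to the trivial `G`-cover (equivalently, its preimage does
not have exactly `|G|` connected components). -/
def GNontrivialAt (c : GCover G Xt X) (F : Finset X.Edge) (v : X.V) : Prop :=
  c.numLiftComponents F v ≠ Fintype.card G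

/-- Independent sets of the matroid `M*(X̃/X)`. -/
def Indep (c : GCover G Xt X) (F : Finset X.Edge) : Prop :=
  ∀ v : X.V, c.GNontrivialAt F v

/-- Bases of the matroid `M*(X̃/X)`: maximal independent sets. -/
def IsBasisD (c : GCover G Xt X) (F : Finset X.Edge) : Prop :=
  c.Indep F ∧ ∀ F' : Finset X.Edge, F ⊆ F' → c.Indep F' → F' = F

/-- The dilated `G`-voltage assignment `η` (together with a section `σ` of the vertex map)
represents the cover: for each edge `e`, some lift of `e` runs from `σ(s(e))` to
`η(e) • σ(t(e))`. -/
structure IsVoltageRep (c : GCover G Xt X) (o : X.Orientation) (σ : X.V → Xt.V)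
    (η : X.Edge → G) : Prop where
  sec : ∀ v, c.vMap (σ v) = v
  lift : ∀ e : X.Edge, ∃ ht : Xt.H, c.hMap ht = o.pick e ∧
    Xt.root ht = σ (X.root (o.pick e)) ∧
    Xt.root (Xt.inv ht) = c.smulV (η e) (σ (X.root (X.inv (o.pick e))))

/-- The component of `v` in `X ∖ F` is nontrivial for the cover twisted by the character
`ρ`: it contains a vertex whose dilation group has nontrivial image under `ρ`, or a closed
path whose voltage has nontrivial image under `ρ`. -/
def RhoNontrivialAt (c : GCover G Xt X) (o : X.Orientation) (η : X.Edge → G)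
    (ρ : G →* ℂ) (F : Finset X.Edge) (v : X.V) : Prop :=
  (∃ u : X.V, X.compRel F v u ∧ ∃ g ∈ c.dilation u, ρ g ≠ 1) ∨
  (∃ l : List X.H, X.IsClosedPath l ∧
    (∀ h ∈ l, X.edgeOf h ∉ F ∧ X.compRel F v (X.root h)) ∧
    ρ (X.pathVoltage o η l) ≠ 1)

/-- Bases of the `ρ`-twisted matroid `M*(X̃/X, ρ)`: maximal subsets `F` such that every
connected component of `X ∖ F` is `ρ`-nontrivial. -/
def IsBasisRho (c : GCover G Xt X) (o : X.Orientation) (η : X.Edge → G)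
    (ρ : G →* ℂ) (F : Finset X.Edge) : Prop :=
  (∀ v : X.V, c.RhoNontrivialAt o η ρ F v) ∧
  ∀ F' : Finset X.Edge, F ⊆ F' → (∀ v : X.V, c.RhoNontrivialAt o η ρ F' v) → F' = F

end GCover

/-- The weight of a connected component with edge set `S`: `|1 - ρ(η(C))|²` where `η(C)` is
the voltage of its unique cycle, if it has one, and `1` otherwise (tree components). -/
noncomputable def cycleWeight {G : Type} [Group G] (X : SerreGraph) (o : X.Orientation)
    (η : X.Edge → G) (ρ : G →* ℂ) (S : Finset X.Edge) : ℝ := by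
  classical exact
  if hc : ∃ l, X.IsEdgeCycle S l then
    ‖(1 : ℂ) - ρ (X.pathVoltage o η hc.choose)‖ ^ 2
  else 1

/-- The weight `w_ρ(F)`: the product of the weights of the connected components of `X ∖ F`. -/
noncomputable def basisWeight {G : Type} [Group G] (X : SerreGraph) (o : X.Orientation)
    (η : X.Edge → G) (ρ : G →* ℂ) (F : Finset X.Edge) : ℝ :=
  ∏ C ∈ X.components F, cycleWeight X o η ρ (X.edgesIn F C)

/-- The weight `w(M*(X̃/X, ρ))` of the `ρ`-twisted matroid: the sum of the weights of its
bases. -/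
noncomputable def GCover.twistedWeight {G : Type} [Group G] [Fintype G] {Xt X : SerreGraph}
    (c : GCover G Xt X) (o : X.Orientation) (η : X.Edge → G) (ρ : G →* ℂ) : ℝ :=
  ∑ F ∈ (Set.toFinite {F : Finset X.Edge | c.IsBasisRho o η ρ F}).toFinset,
    basisWeight X o η ρ F

/-- The weight polynomial `P_{X̃/X,ρ} = ∑_F w_ρ(F) ∏_{e ∈ F} x_e` of the `ρ`-twisted
matroid, summed over its bases. -/
noncomputable def GCover.twistedWeightPoly {G : Type} [Group G] [Fintype G]
    {Xt X : SerreGraph} (c : GCover G Xt X) (o : X.Orientation) (η : X.Edge → G)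
    (ρ : G →* ℂ) : MvPolynomial X.Edge ℝ :=
  ∑ F ∈ (Set.toFinite {F : Finset X.Edge | c.IsBasisRho o η ρ F}).toFinset,
    MvPolynomial.C (basisWeight X o η ρ F) * ∏ e ∈ F, MvPolynomial.X e

end SerreGraph
namespace SerreGraph

/-- One contraction step: `a` and `b` are joined by an edge belonging to `F`. -/
def contractStep (X : SerreGraph) (F : Finset X.Edge) (a b : X.V) : Prop :=
  ∃ h, X.edgeOf h ∈ F ∧ X.root h = a ∧ X.root (X.inv h) = b

/-- Data exhibiting `Xc` as the contraction of `X` along the edge set `F`: the vertices of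
`Xc` are the connected components of the subgraph spanned by `F`, and the half-edges of `Xc`
are the half-edges of `X` not lying on `F`. -/
structure ContractionData (X Xc : SerreGraph) (F : Finset X.Edge) where
  vMap : X.V → Xc.V
  hMap : (h : X.H) → X.edgeOf h ∉ F → Xc.H
  hMap_injective : ∀ h₁ hh₁ h₂ hh₂, hMap h₁ hh₁ = hMap h₂ hh₂ → h₁ = h₂
  hMap_surjective : ∀ k : Xc.H, ∃ h hh, hMap h hh = k
  hMap_inv : ∀ h hh hh', hMap (X.inv h) hh' = Xc.inv (hMap h hh)
  root_hMap : ∀ h hh, Xc.root (hMap h hh) = vMap (X.root h)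
  vMap_surjective : Function.Surjective vMap
  vMap_eq_iff : ∀ u v, vMap u = vMap v ↔ Relation.ReflTransGen (X.contractStep F) u v

/-- The valency of a vertex (loops counted twice). -/
noncomputable def valency (X : SerreGraph) (v : X.V) : ℕ :=
  Nat.card {h : X.H // X.root h = v}

/-- The Laplacian matrix `L = Q - A` of a graph. -/
noncomputable def lapl (X : SerreGraph) : Matrix X.V X.V ℤ :=
  Matrix.of fun u v =>
    (if u = v then (X.valency u : ℤ) else 0) -
      (Nat.card {h : X.H // X.root h = u ∧ X.root (X.inv h) = v} : ℤ)

/-- The Laplacian as a homomorphism on divisors. -/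
noncomputable def laplHom (X : SerreGraph) : (X.V → ℤ) →+ (X.V → ℤ) where
  toFun := fun D u => ∑ v, X.lapl u v * D v
  map_zero' := by funext u; simp
  map_add' := by
    intro a b; funext u
    simp [mul_add, Finset.sum_add_distrib]

/-- Divisors of total degree zero. -/
noncomputable def div0 (X : SerreGraph) : AddSubgroup (X.V → ℤ) where
  carrier := {D | ∑ v, D v = 0}
  add_mem' := by
    intro a b ha hb
    simp only [Set.mem_setOf_eq, Pi.add_apply] at *
    simp [Finset.sum_add_distrib, ha, hb]
  zero_mem' := by simp
  neg_mem' := by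
    intro a ha
    simp only [Set.mem_setOf_eq, Pi.neg_apply] at *
    simp [ha]

/-- The subgroup of principal divisors: the image of the Laplacian. -/
noncomputable def principal (X : SerreGraph) : AddSubgroup (X.V → ℤ) :=
  (laplHom X).range

/-- The Jacobian (critical) group `Jac(X) = Div₀(X) / Im L`. -/
noncomputable def jac (X : SerreGraph) : Type :=
  X.div0 ⧸ ((X.principal).addSubgroupOf X.div0)

noncomputable instance (X : SerreGraph) : AddCommGroup X.jac :=
  inferInstanceAs (AddCommGroup (X.div0 ⧸ ((X.principal).addSubgroupOf X.div0)))

/-- The pushforward of divisors along a graph morphism. -/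
noncomputable def pushforward {Xt X : SerreGraph} (f : Hom Xt X) (D : Xt.V → ℤ) :
    X.V → ℤ :=
  fun v => ∑ w ∈ Finset.univ.filter (fun w => f.vMap w = v), D w

/-- The diagonal valency matrix `Q` (over `ℂ`). -/
noncomputable def qMatrix (X : SerreGraph) : Matrix X.V X.V ℂ :=
  Matrix.of fun u v => if u = v then (X.valency u : ℂ) else 0

/-- The `ρ`-twisted adjacency matrix `A_ρ`. -/
noncomputable def twistedAdj {G : Type} [Group G] (X : SerreGraph) (o : X.Orientation)
    (η : X.Edge → G) (ρ : G →* ℂ) : Matrix X.V X.V ℂ :=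
  Matrix.of fun u v =>
    (∑ e ∈ Finset.univ.filter
        (fun e => X.root (o.pick e) = u ∧ X.root (X.inv (o.pick e)) = v), ρ (η e)) +
    (∑ e ∈ Finset.univ.filter
        (fun e => X.root (o.pick e) = v ∧ X.root (X.inv (o.pick e)) = u),
          (starRingEnd ℂ) (ρ (η e)))

/-- The `ρ`-twisted Laplacian `L_ρ = Q - A_ρ`. -/
noncomputable def twistedLapl {G : Type} [Group G] (X : SerreGraph) (o : X.Orientation)
    (η : X.Edge → G) (ρ : G →* ℂ) : Matrix X.V X.V ℂ :=
  X.qMatrix - X.twistedAdj o η ρ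

/-- The reciprocal `ζ_M(s, x_e, X)⁻¹ = det(I - W)` of the metric zeta function, where `W`
is the edge matrix with entries `s^{x_e}` (two-term determinant formula). -/
noncomputable def zetaMInv (X : SerreGraph) (x : X.Edge → ℝ) (s : ℝ) : ℝ :=
  Matrix.det ((1 : Matrix X.H X.H ℝ) - Matrix.of fun a b : X.H =>
    if X.root (X.inv a) = X.root b ∧ b ≠ X.inv a then s ^ (x (X.edgeOf a)) else 0)

/-- The reciprocal of the Ihara zeta function: the metric zeta with all lengths one. -/
noncomputable def zetaInv (X : SerreGraph) (s : ℝ) : ℝ :=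
  X.zetaMInv (fun _ => 1) s

/-- The reciprocal `L_M(s, x_e, X̃/X, ρ)⁻¹ = det(I - W_ρ)` of the metric Artin `L`-function
of the cover defined by the voltage assignment `η` (two-term determinant formula). -/
noncomputable def LMInv {G : Type} [Group G] (X : SerreGraph) (o : X.Orientation)
    (η : X.Edge → G) (ρ : G →* ℂ) (x : X.Edge → ℝ) (s : ℝ) : ℂ :=
  Matrix.det ((1 : Matrix X.H X.H ℂ) - Matrix.of fun a b : X.H =>
    if X.root (X.inv a) = X.root b ∧ b ≠ X.inv a then
      ρ (X.halfVoltage o η a) * ((s ^ (x (X.edgeOf a)) : ℝ) : ℂ)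
    else 0)

/-- The weight polynomial of a free cover defined by the voltage assignment `η`, twisted by
`ρ`: the sum over all `(g-1)`-element edge sets `F` all of whose complementary components
have genus one of `∏ᵢ |1 - ρ(η(Xᵢ))|² ∏_{e ∈ F} x_e`. -/
noncomputable def freeWeightPoly {G : Type} [Group G] (X : SerreGraph)
    (o : X.Orientation) (η : X.Edge → G) (ρ : G →* ℂ) : MvPolynomial X.Edge ℝ :=
  ∑ F ∈ (Set.toFinite {F : Finset X.Edge |
      F.card + Fintype.card X.V = Fintype.card X.Edge ∧
      ∀ C ∈ X.components F, (X.edgesIn F C).card = C.card}).toFinset,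
    MvPolynomial.C (basisWeight X o η ρ F) * ∏ e ∈ F, MvPolynomial.X e

/-- The `j`-th vertex on the chain subdividing the edge `e` into `n e` parts. -/
noncomputable def subVertex (X : SerreGraph) (o : X.Orientation) (n : X.Edge → ℕ)
    (e : X.Edge) (j : ℕ) : X.V ⊕ ((e : X.Edge) × Fin (n e - 1)) :=
  if _h0 : j = 0 then Sum.inl (X.root (o.pick e))
  else if h : j < n e then Sum.inr ⟨e, ⟨j - 1, by omega⟩⟩
  else Sum.inl (X.root (X.inv (o.pick e)))

/-- The graph obtained from `X` by replacing each edge `e` by a chain of `n e` edges. -/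
noncomputable def subdivide (X : SerreGraph) (o : X.Orientation) (n : X.Edge → ℕ) :
    SerreGraph where
  V := X.V ⊕ ((e : X.Edge) × Fin (n e - 1))
  H := (e : X.Edge) × (Fin (n e) × Bool)
  fintypeV := inferInstance
  fintypeH := inferInstance
  decEqV := Classical.decEq _
  decEqH := Classical.decEq _
  inv := fun p => ⟨p.1, (p.2.1, !p.2.2)⟩
  inv_inv := by rintro ⟨e, i, b⟩; simp
  inv_ne := by rintro ⟨e, i, b⟩ hcon; simp at hcon
  root := fun p => X.subVertex o n p.1 (if p.2.2 then (p.2.1 : ℕ) + 1 else (p.2.1 : ℕ))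

end SerreGraph

/-- The cycle graph with `k` vertices, every pair of cyclically adjacent vertices joined by
`M` parallel edges. -/
def cycleGraph (k M : ℕ) : SerreGraph where
  V := Fin k
  H := Fin k × Fin M × Bool
  fintypeV := inferInstance
  fintypeH := inferInstance
  decEqV := inferInstance
  decEqH := inferInstance
  inv := fun p => (p.1, p.2.1, !p.2.2)
  inv_inv := by rintro ⟨i, j, b⟩; simp
  inv_ne := by rintro ⟨i, j, b⟩ hcon; simp at hcon
  root := fun p => if p.2.2 then finRotate k p.1 else p.1

/-! ### Auxiliary development for the main theorem -/

namespace SerreGraph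

open Relation Finset

section AuxGraph

variable {X : SerreGraph}

lemma edgeOf_eq_iff {h h' : X.H} :
    X.edgeOf h' = X.edgeOf h ↔ h' = h ∨ h' = X.inv h := by
  constructor
  · intro hq
    have := Quot.eqvGen_exact hq
    have main : ∀ a b : X.H, Relation.EqvGen (fun x y : X.H => y = X.inv x) a b →
        a = b ∨ a = X.inv b := by
      intro a b hab
      induction hab with
      | rel x y hxy => right; rw [hxy, X.inv_inv]
      | refl x => left; rfl
      | symm x y _ ih =>
          rcases ih with rfl | h
          · left; rfl
          · right; rw [h, X.inv_inv]
      | trans x y z _ _ ih₁ ih₂ =>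
          rcases ih₁ with rfl | h1
          · exact ih₂
          · rcases ih₂ with rfl | h2
            · right; exact h1
            · left; rw [h1, h2, X.inv_inv]
    exact main _ _ this
  · rintro (rfl | rfl)
    · rfl
    · exact X.edgeOf_inv h

lemma adjStep_symm {F : Finset X.Edge} {u v : X.V} (h : X.adjStep F u v) :
    X.adjStep F v u := by
  obtain ⟨a, ha1, ha2, ha3⟩ := h
  exact ⟨X.inv a, ha2, by rw [X.inv_inv]; exact ha1, by rw [X.edgeOf_inv]; exact ha3⟩

lemma compRel_refl (F : Finset X.Edge) (v : X.V) : X.compRel F v v :=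
  ReflTransGen.refl

lemma compRel_trans {F : Finset X.Edge} {u v w : X.V}
    (h1 : X.compRel F u v) (h2 : X.compRel F v w) : X.compRel F u w :=
  ReflTransGen.trans h1 h2

lemma compRel_symm {F : Finset X.Edge} {u v : X.V} (h : X.compRel F u v) :
    X.compRel F v u :=
  by
    haveI : Std.Symm (X.adjStep F) := ⟨fun _ _ => adjStep_symm⟩
    exact Std.Symm.symm (r := ReflTransGen (X.adjStep F)) _ _ h

lemma adjStep_mono {F F' : Finset X.Edge} (hFF : F ⊆ F') {u v : X.V}
    (h : X.adjStep F' u v) : X.adjStep F u v := by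
  obtain ⟨a, ha1, ha2, ha3⟩ := h
  exact ⟨a, ha1, ha2, fun hc => ha3 (hFF hc)⟩

lemma compRel_mono {F F' : Finset X.Edge} (hFF : F ⊆ F') {u v : X.V}
    (h : X.compRel F' u v) : X.compRel F u v :=
  ReflTransGen.mono (fun _ _ => adjStep_mono hFF) _ _ h

lemma mem_compVerts {F : Finset X.Edge} {u v : X.V} :
    u ∈ X.compVerts F v ↔ X.compRel F v u := by
  simp [SerreGraph.compVerts]

lemma mem_compVerts_self (F : Finset X.Edge) (v : X.V) : v ∈ X.compVerts F v :=
  mem_compVerts.2 (compRel_refl F v)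

lemma compVerts_eq_of_rel {F : Finset X.Edge} {u v : X.V} (h : X.compRel F u v) :
    X.compVerts F u = X.compVerts F v := by
  ext x
  simp only [mem_compVerts]
  exact ⟨fun hx => compRel_trans (compRel_symm h) hx, fun hx => compRel_trans h hx⟩

lemma compRel_univ {u v : X.V} : X.compRel (Finset.univ : Finset X.Edge) u v ↔ u = v := by
  constructor
  · intro h
    induction h with
    | refl => rfl
    | tail _ hstep ih =>
        obtain ⟨a, _, _, ha3⟩ := hstep
        exact absurd (Finset.mem_univ _) ha3
  · rintro rfl; exact compRel_refl _ _

lemma compVerts_univ (v : X.V) : X.compVerts (Finset.univ : Finset X.Edge) v = {v} := by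
  ext x
  simp only [mem_compVerts, Finset.mem_singleton, compRel_univ]
  exact ⟨fun h => h.symm, fun h => h.symm⟩

end AuxGraph

end SerreGraph

namespace SerreGraph
namespace GCover

open Relation Finset

variable {G : Type} [CommGroup G] [Fintype G] {Xt X : SerreGraph}
variable (c : GCover G Xt X)

/-- Connectivity upstairs over `X ∖ F`. -/
def liftRel (F : Finset X.Edge) : Xt.V → Xt.V → Prop :=
  Relation.ReflTransGen (c.liftStep F)

variable {c}

lemma liftStep_symm {F : Finset X.Edge} {a b : Xt.V} (h : c.liftStep F a b) :
    c.liftStep F b a := by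
  obtain ⟨ht, h1, h2, h3⟩ := h
  refine ⟨Xt.inv ht, h2, by rw [Xt.inv_inv]; exact h1, ?_⟩
  rw [c.hMap_inv, X.edgeOf_inv]
  exact h3

lemma liftRel_refl (F : Finset X.Edge) (a : Xt.V) : c.liftRel F a a := ReflTransGen.refl

lemma liftRel_trans {F : Finset X.Edge} {a b d : Xt.V}
    (h1 : c.liftRel F a b) (h2 : c.liftRel F b d) : c.liftRel F a d :=
  ReflTransGen.trans h1 h2

lemma liftRel_symm {F : Finset X.Edge} {a b : Xt.V} (h : c.liftRel F a b) :
    c.liftRel F b a :=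
  by
    haveI : Std.Symm (c.liftStep F) := ⟨fun _ _ => liftStep_symm⟩
    exact Std.Symm.symm (r := ReflTransGen (c.liftStep F)) _ _ h

lemma liftStep_mono {F F' : Finset X.Edge} (hFF : F ⊆ F') {a b : Xt.V}
    (h : c.liftStep F' a b) : c.liftStep F a b := by
  obtain ⟨ht, h1, h2, h3⟩ := h
  exact ⟨ht, h1, h2, fun hc => h3 (hFF hc)⟩

lemma liftRel_mono {F F' : Finset X.Edge} (hFF : F ⊆ F') {a b : Xt.V}
    (h : c.liftRel F' a b) : c.liftRel F a b :=
  ReflTransGen.mono (fun _ _ => liftStep_mono hFF) _ _ h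

lemma liftStep_smul {F : Finset X.Edge} (g : G) {a b : Xt.V} (h : c.liftStep F a b) :
    c.liftStep F (c.smulV g a) (c.smulV g b) := by
  obtain ⟨ht, h1, h2, h3⟩ := h
  refine ⟨c.smulH g ht, by rw [c.root_smulH, h1], ?_, ?_⟩
  · rw [← c.smulH_inv, c.root_smulH, h2]
  · rw [c.hMap_smulH]; exact h3

lemma liftRel_smul {F : Finset X.Edge} (g : G) {a b : Xt.V} (h : c.liftRel F a b) :
    c.liftRel F (c.smulV g a) (c.smulV g b) :=
  ReflTransGen.lift (c.smulV g) (fun _ _ hs => liftStep_smul g hs) _ _ h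

lemma liftStep_vMap {F : Finset X.Edge} {a b : Xt.V} (h : c.liftStep F a b) :
    X.adjStep F (c.vMap a) (c.vMap b) := by
  obtain ⟨ht, h1, h2, h3⟩ := h
  refine ⟨c.hMap ht, by rw [c.root_hMap, h1], ?_, h3⟩
  rw [← c.hMap_inv, c.root_hMap, h2]

lemma liftRel_compRel {F : Finset X.Edge} {a b : Xt.V} (h : c.liftRel F a b) :
    X.compRel F (c.vMap a) (c.vMap b) :=
  ReflTransGen.lift c.vMap (fun _ _ hs => liftStep_vMap hs) _ _ h

lemma liftRel_univ {a b : Xt.V} (h : c.liftRel (Finset.univ : Finset X.Edge) a b) :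
    a = b := by
  induction h with
  | refl => rfl
  | tail _ hstep ih =>
      obtain ⟨ht, _, _, h3⟩ := hstep
      exact absurd (Finset.mem_univ _) h3

lemma exists_lift_vertex (v : X.V) : ∃ w : Xt.V, c.vMap w = v := by
  by_contra hc
  push_neg at hc
  have := c.deg_eq v
  rw [Finset.filter_false_of_mem (fun w _ => hc w)] at this
  simp only [Finset.sum_empty] at this
  have hG : 0 < Fintype.card G := Fintype.card_pos
  omega

lemma exists_lift_edge {w : Xt.V} {h : X.H} (hroot : X.root h = c.vMap w) :
    ∃ ht : Xt.H, Xt.root ht = w ∧ c.hMap ht = h := by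
  have hb := c.harm.balanced w h hroot
  have hpos : 0 < Nat.card {h' : Xt.H // Xt.root h' = w ∧ c.hMap h' = h} := by
    rw [← hb]; exact c.harm.pos w
  have hne : Nonempty {h' : Xt.H // Xt.root h' = w ∧ c.hMap h' = h} :=
    (Nat.card_pos_iff.1 hpos).1
  obtain ⟨ht, h1, h2⟩ := hne
  exact ⟨ht, h1, h2⟩

lemma path_lift {F : Finset X.Edge} {v₁ v₂ : X.V} (h : X.compRel F v₁ v₂)
    {w : Xt.V} (hw : c.vMap w = v₁) :
    ∃ w' : Xt.V, c.liftRel F w w' ∧ c.vMap w' = v₂ := by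
  induction h with
  | refl => exact ⟨w, liftRel_refl F w, hw⟩
  | tail _ hstep ih =>
      obtain ⟨w', hrel, hw'⟩ := ih
      obtain ⟨a, ha1, ha2, ha3⟩ := hstep
      obtain ⟨ht, hht1, hht2⟩ := exists_lift_edge (by rw [ha1, hw'])
      refine ⟨Xt.root (Xt.inv ht), ?_, ?_⟩
      · refine liftRel_trans hrel (ReflTransGen.single ⟨ht, hht1, rfl, ?_⟩)
        rw [hht2]; exact ha3
      · rw [← c.root_hMap, c.hMap_inv, hht2]; exact ha2

/-- Transitivity of `G` on the components of the preimage of a component. -/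
lemma exists_smul_liftRel {F : Finset X.Edge} {a b : Xt.V}
    (h : X.compRel F (c.vMap a) (c.vMap b)) :
    ∃ g : G, c.liftRel F (c.smulV g a) b := by
  obtain ⟨w', hrel, hw'⟩ := path_lift h rfl
  obtain ⟨g, hg⟩ := c.vertex_trans w' b hw'
  exact ⟨g, by rw [← hg]; exact liftRel_smul g hrel⟩

lemma smul_eq_of_hMap_eq {ht ht' : Xt.H} (h : c.hMap ht = c.hMap ht') :
    ∃ g : G, c.smulH g ht = ht' := by
  obtain ⟨g, hg | hg⟩ := c.edge_trans ht ht' (Or.inl h.symm)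
  · exact ⟨g, hg⟩
  · exfalso
    have h1 : c.hMap (c.smulH g ht) = c.hMap ht := c.hMap_smulH g ht
    rw [hg, c.hMap_inv, ← h] at h1
    exact X.inv_ne (c.hMap ht) h1

/-- The component of `v` in `X ∖ F` is nontrivial for the cover. -/
def Ntv (c : GCover G Xt X) (F : Finset X.Edge) (v : X.V) : Prop :=
  ∃ (w : Xt.V) (g : G), c.vMap w = v ∧ g ≠ 1 ∧ c.liftRel F w (c.smulV g w)

lemma ntv_mono {F F' : Finset X.Edge} (hFF : F ⊆ F') {v : X.V} (h : c.Ntv F' v) :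
    c.Ntv F v := by
  obtain ⟨w, g, h1, h2, h3⟩ := h
  exact ⟨w, g, h1, h2, liftRel_mono hFF h3⟩

lemma ntv_of_compRel {F : Finset X.Edge} {v u : X.V} (hr : X.compRel F v u)
    (h : c.Ntv F v) : c.Ntv F u := by
  obtain ⟨w, g, h1, h2, h3⟩ := h
  obtain ⟨w', hrel, hw'⟩ := path_lift hr (c := c) h1
  refine ⟨w', g, hw', h2, ?_⟩
  exact liftRel_trans (liftRel_symm hrel) (liftRel_trans h3 (liftRel_smul g hrel))

lemma ntv_iff_of_compRel {F : Finset X.Edge} {v u : X.V} (hr : X.compRel F v u) :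
    c.Ntv F v ↔ c.Ntv F u :=
  ⟨ntv_of_compRel hr, ntv_of_compRel (compRel_symm hr)⟩

end GCover
end SerreGraph

namespace SerreGraph
namespace GCover

open Relation Finset

variable {G : Type} [CommGroup G] [Fintype G] {Xt X : SerreGraph}
variable {c : GCover G Xt X}

section ClaimA

variable (F : Finset X.Edge) (v : X.V)

private abbrev S : Type := {w : Xt.V // X.compRel F v (c.vMap w)}

private abbrev QR : Type :=
  Quot (fun a b : {w : Xt.V // X.compRel F v (c.vMap w)} => c.liftStep F a.1 b.1)

variable {F v}

lemma quot_mk_eq_of_liftRel :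
    ∀ (x y : Xt.V) (hrel : c.liftRel F x y) (hx : X.compRel F v (c.vMap x))
    (hy : X.compRel F v (c.vMap y)),
    (Quot.mk _ ⟨x, hx⟩ : QR (c := c) F v) = Quot.mk _ ⟨y, hy⟩ := by
  intro x y hrel
  induction hrel with
  | refl => intro hx hy; rfl
  | @tail m z hxm hstep ih =>
      intro hx hz
      have hm : X.compRel F v (c.vMap m) :=
        compRel_trans hx (liftRel_compRel hxm)
      exact (ih hx hm).trans (Quot.sound hstep)

lemma liftRel_of_quot_mk_eq {a b : S (c := c) F v}
    (h : (Quot.mk _ a : QR (c := c) F v) = Quot.mk _ b) :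
    c.liftRel F a.1 b.1 := by
  have main : ∀ x y : S (c := c) F v,
      Relation.EqvGen (fun a b : S (c := c) F v => c.liftStep F a.1 b.1) x y →
      c.liftRel F x.1 y.1 := by
    intro x y hxy
    induction hxy with
    | rel x y hxy => exact ReflTransGen.single hxy
    | refl x => exact liftRel_refl F _
    | symm x y _ ih => exact liftRel_symm ih
    | trans x y z _ _ ih₁ ih₂ => exact liftRel_trans ih₁ ih₂
  exact main a b (Quot.eqvGen_exact h)

lemma gNontrivialAt_iff_ntv : c.GNontrivialAt F v ↔ c.Ntv F v := by
  classical
  obtain ⟨w₀, hw₀⟩ := exists_lift_vertex (c := c) v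
  have hmem : ∀ g : G, X.compRel F v (c.vMap (c.smulV g w₀)) := by
    intro g; rw [c.vMap_smulV, hw₀]; exact compRel_refl F v
  set χ : G → QR (c := c) F v := fun g => Quot.mk _ ⟨c.smulV g w₀, hmem g⟩ with hχ
  have hsurj : Function.Surjective χ := by
    intro q
    obtain ⟨⟨w, hw⟩, hq⟩ := Quot.exists_rep q
    obtain ⟨g, hg⟩ := exists_smul_liftRel (c := c) (a := w₀) (b := w)
      (by rw [hw₀]; exact hw)
    exact ⟨g, (quot_mk_eq_of_liftRel _ _ hg (hmem g) hw).trans hq⟩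
  have hcard : c.numLiftComponents F v = Nat.card (QR (c := c) F v) := rfl
  constructor
  · intro hG
    by_contra hntv
    apply hG
    have hinj : Function.Injective χ := by
      intro g g' hgg
      have := liftRel_of_quot_mk_eq (c := c) hgg
      have h2 : c.liftRel F w₀ (c.smulV (g⁻¹ * g') w₀) := by
        have := liftRel_smul (c := c) g⁻¹ this
        rw [← c.mul_smulV, ← c.mul_smulV, inv_mul_cancel, c.one_smulV] at this
        exact this
      by_contra hne
      exact hntv ⟨w₀, g⁻¹ * g', hw₀, fun h1 => hne (by rwa [inv_mul_eq_one] at h1), h2⟩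
    rw [hcard, ← Nat.card_eq_of_bijective χ ⟨hinj, hsurj⟩, Nat.card_eq_fintype_card]
  · intro hntv
    obtain ⟨w, g, hw, hg, hrel⟩ := hntv
    obtain ⟨k, hk⟩ := c.vertex_trans w w₀ (by rw [hw, hw₀])
    have hrel₀ : c.liftRel F w₀ (c.smulV g w₀) := by
      have := liftRel_smul (c := c) k hrel
      rw [hk, ← c.mul_smulV, mul_comm k g, c.mul_smulV, hk] at this
      exact this
    have hχeq : χ g = χ 1 := by
      apply quot_mk_eq_of_liftRel
      rw [c.one_smulV]
      exact liftRel_symm hrel₀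
    have hsurj' : Function.Surjective (fun x : {x : G // x ≠ g} => χ x.1) := by
      intro q
      obtain ⟨y, hy⟩ := hsurj q
      by_cases hyg : y = g
      · refine ⟨⟨1, fun h => hg h.symm⟩, ?_⟩
        show χ 1 = q
        rw [← hχeq, ← hyg]; exact hy
      · exact ⟨⟨y, hyg⟩, hy⟩
    have hle : Nat.card (QR (c := c) F v) ≤ Nat.card {x : G // x ≠ g} :=
      Nat.card_le_card_of_surjective _ hsurj'
    have hlt : Nat.card {x : G // x ≠ g} < Fintype.card G := by
      rw [Nat.card_eq_fintype_card]
      have : Fintype.card {x : G // x ≠ g} = Fintype.card G - 1 := by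
        rw [Fintype.card_subtype_compl, Fintype.card_subtype_eq]
      rw [this]
      have : 0 < Fintype.card G := Fintype.card_pos
      omega
    intro hceq
    rw [hcard] at hceq
    omega

end ClaimA

end GCover
end SerreGraph

namespace SerreGraph

open Relation Finset

section Split

variable {X : SerreGraph}

lemma adjStep_of_edge {F : Finset X.Edge} {h₀ : X.H} (he : X.edgeOf h₀ ∉ F) :
    X.adjStep F (X.root h₀) (X.root (X.inv h₀)) :=
  ⟨h₀, rfl, rfl, he⟩

lemma compRel_insert_split {F : Finset X.Edge} {e : X.Edge} {h₀ : X.H}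
    (hh₀ : X.edgeOf h₀ = e) {x y : X.V} (h : X.compRel F x y) :
    X.compRel (insert e F) x y ∨
      ((X.compRel (insert e F) x (X.root h₀) ∨ X.compRel (insert e F) x (X.root (X.inv h₀))) ∧
       (X.compRel (insert e F) y (X.root h₀) ∨ X.compRel (insert e F) y (X.root (X.inv h₀)))) := by
  induction h with
  | refl => exact Or.inl (compRel_refl _ _)
  | @tail m z hxm hstep ih =>
      obtain ⟨a, ha1, ha2, ha3⟩ := hstep
      by_cases hae : X.edgeOf a = e
      · have hcases : a = h₀ ∨ a = X.inv h₀ := edgeOf_eq_iff.1 (by rw [hae, hh₀])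
        have hxside : X.compRel (insert e F) x (X.root h₀) ∨
            X.compRel (insert e F) x (X.root (X.inv h₀)) := by
          rcases ih with hl | hr
          · rcases hcases with rfl | rfl
            · exact Or.inl (by rw [ha1]; exact hl)
            · exact Or.inr (by rw [ha1]; exact hl)
          · exact hr.1
        refine Or.inr ⟨hxside, ?_⟩
        rcases hcases with rfl | rfl
        · exact Or.inr (by rw [ha2]; exact compRel_refl _ _)
        · exact Or.inl (by rw [X.inv_inv] at ha2; rw [ha2]; exact compRel_refl _ _)
      · have hstep' : X.adjStep (insert e F) m z :=
          ⟨a, ha1, ha2, by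
            simp only [Finset.mem_insert, not_or]
            exact ⟨hae, ha3⟩⟩
        rcases ih with hl | ⟨hx, hm⟩
        · exact Or.inl (hl.tail hstep')
        · refine Or.inr ⟨hx, ?_⟩
          have hzm : X.compRel (insert e F) z m :=
            ReflTransGen.single (adjStep_symm hstep')
          rcases hm with hm | hm
          · exact Or.inl (compRel_trans hzm hm)
          · exact Or.inr (compRel_trans hzm hm)

lemma compRel_insert_of_away {F : Finset X.Edge} {e : X.Edge} {h₀ : X.H}
    (hh₀ : X.edgeOf h₀ = e) (he : e ∉ F) {x y : X.V}
    (hx : ¬ X.compRel F x (X.root h₀)) (h : X.compRel F x y) :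
    X.compRel (insert e F) x y := by
  rcases compRel_insert_split hh₀ h with hl | ⟨hxs, _⟩
  · exact hl
  · exfalso
    rcases hxs with hxs | hxs
    · exact hx (compRel_mono (Finset.subset_insert e F) hxs)
    · refine hx (compRel_trans (compRel_mono (Finset.subset_insert e F) hxs) ?_)
      exact compRel_symm (ReflTransGen.single (adjStep_of_edge (by rw [hh₀]; exact he)))

lemma compRel_insert_reach {F : Finset X.Edge} {e : X.Edge} {h₀ : X.H}
    (hh₀ : X.edgeOf h₀ = e) {x : X.V}
    (h : X.compRel F x (X.root h₀)) :
    X.compRel (insert e F) x (X.root h₀) ∨ X.compRel (insert e F) x (X.root (X.inv h₀)) := by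
  rcases compRel_insert_split hh₀ h with hl | ⟨hxs, _⟩
  · exact Or.inl hl
  · exact hxs

lemma compVerts_insert_of_away {F : Finset X.Edge} {e : X.Edge} {h₀ : X.H}
    (hh₀ : X.edgeOf h₀ = e) (he : e ∉ F) {x : X.V}
    (hx : ¬ X.compRel F x (X.root h₀)) :
    X.compVerts (insert e F) x = X.compVerts F x := by
  ext y
  simp only [mem_compVerts]
  exact ⟨fun hy => compRel_mono (Finset.subset_insert e F) hy,
    fun hy => compRel_insert_of_away hh₀ he hx hy⟩

end Split

namespace GCover

variable {G : Type} [CommGroup G] [Fintype G] {Xt X : SerreGraph}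
variable {c : GCover G Xt X}

lemma liftRel_insert_of_away {F : Finset X.Edge} {e : X.Edge} {h₀ : X.H}
    (hh₀ : X.edgeOf h₀ = e) (he : e ∉ F) {x : X.V}
    (hx : ¬ X.compRel F x (X.root h₀)) :
    ∀ a b : Xt.V, c.liftRel F a b → X.compRel F x (c.vMap a) →
      c.liftRel (insert e F) a b := by
  intro a b hab
  induction hab with
  | refl => intro _; exact liftRel_refl _ _
  | @tail m z hxm hstep ih =>
      intro ha
      have hm : X.compRel F x (c.vMap m) := compRel_trans ha (liftRel_compRel hxm)
      obtain ⟨ht, h1, h2, h3⟩ := hstep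
      by_cases hte : X.edgeOf (c.hMap ht) = e
      · exfalso
        have hcases : c.hMap ht = h₀ ∨ c.hMap ht = X.inv h₀ :=
          edgeOf_eq_iff.1 (by rw [hte, hh₀])
        have hroot : X.root (c.hMap ht) = c.vMap m := by rw [c.root_hMap, h1]
        rw [← hroot] at hm
        rcases hcases with hc | hc
        · rw [hc] at hm; exact hx hm
        · rw [hc] at hm
          exact hx (compRel_trans hm
            (compRel_symm (ReflTransGen.single (adjStep_of_edge (by rw [hh₀]; exact he)))))
      · refine (ih ha).tail ⟨ht, h1, h2, ?_⟩
        simp only [Finset.mem_insert, not_or]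
        exact ⟨hte, h3⟩

lemma ntv_insert_iff_away {F : Finset X.Edge} {e : X.Edge} {h₀ : X.H}
    (hh₀ : X.edgeOf h₀ = e) (he : e ∉ F) {x : X.V}
    (hx : ¬ X.compRel F x (X.root h₀)) :
    c.Ntv F x ↔ c.Ntv (insert e F) x := by
  constructor
  · rintro ⟨w, g, hw, hg, hrel⟩
    exact ⟨w, g, hw, hg, liftRel_insert_of_away hh₀ he hx w _ hrel
      (by rw [hw]; exact compRel_refl F x)⟩
  · exact fun h => ntv_mono (Finset.subset_insert e F) h

/-- A `G`-equivariant labelling of the fiber components over the component of `v`,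
witnessing triviality of the restricted cover. -/
structure IsTrivialization (c : GCover G Xt X) (F : Finset X.Edge) (v : X.V)
    (Φ : Xt.V → G) : Prop where
  equiv : ∀ (g : G) (w : Xt.V), X.compRel F v (c.vMap w) → Φ (c.smulV g w) = g * Φ w
  const : ∀ (a b : Xt.V), X.compRel F v (c.vMap a) → c.liftStep F a b → Φ a = Φ b

lemma IsTrivialization.const_liftRel {F : Finset X.Edge} {v : X.V} {Φ : Xt.V → G}
    (hΦ : IsTrivialization c F v Φ) :
    ∀ a b : Xt.V, c.liftRel F a b → X.compRel F v (c.vMap a) → Φ a = Φ b := by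
  intro a b hab
  induction hab with
  | refl => intro _; rfl
  | @tail m z hxm hstep ih =>
      intro ha
      have hm : X.compRel F v (c.vMap m) := compRel_trans ha (liftRel_compRel hxm)
      exact (ih ha).trans (hΦ.const m z hm hstep)

lemma not_ntv_of_triv {F : Finset X.Edge} {v : X.V} {Φ : Xt.V → G}
    (hΦ : IsTrivialization c F v Φ) : ¬ c.Ntv F v := by
  rintro ⟨w, g, hw, hg, hrel⟩
  have h1 : Φ w = Φ (c.smulV g w) :=
    hΦ.const_liftRel w _ hrel (by rw [hw]; exact compRel_refl F v)
  have h2 : Φ (c.smulV g w) = g * Φ w :=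
    hΦ.equiv g w (by rw [hw]; exact compRel_refl F v)
  rw [h2] at h1
  exact hg (by
    have := h1.symm
    rwa [mul_eq_right] at this)

lemma exists_triv_of_not_ntv {F : Finset X.Edge} {v : X.V} (hntv : ¬ c.Ntv F v) :
    ∃ Φ : Xt.V → G, IsTrivialization c F v Φ := by
  classical
  obtain ⟨w₀, hw₀⟩ := exists_lift_vertex (c := c) v
  have huniq : ∀ (w : Xt.V) (g₁ g₂ : G), c.liftRel F (c.smulV g₁ w₀) w →
      c.liftRel F (c.smulV g₂ w₀) w → g₁ = g₂ := by
    intro w g₁ g₂ h₁ h₂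
    have h3 : c.liftRel F (c.smulV g₁ w₀) (c.smulV g₂ w₀) :=
      liftRel_trans h₁ (liftRel_symm h₂)
    have h4 : c.liftRel F w₀ (c.smulV (g₁⁻¹ * g₂) w₀) := by
      have := liftRel_smul (c := c) g₁⁻¹ h3
      rwa [← c.mul_smulV, ← c.mul_smulV, inv_mul_cancel, c.one_smulV] at this
    by_contra hne
    exact hntv ⟨w₀, g₁⁻¹ * g₂, hw₀, fun h => hne (by rwa [inv_mul_eq_one] at h), h4⟩
  set Φ : Xt.V → G := fun w =>
    if h : ∃ g : G, c.liftRel F (c.smulV g w₀) w then h.choose else 1 with hΦdef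
  have hspec : ∀ (w : Xt.V) (g : G), c.liftRel F (c.smulV g w₀) w → Φ w = g := by
    intro w g hg
    have hex : ∃ g : G, c.liftRel F (c.smulV g w₀) w := ⟨g, hg⟩
    rw [hΦdef]
    simp only [hex, dif_pos]
    exact huniq w _ g hex.choose_spec hg
  have hex : ∀ w : Xt.V, X.compRel F v (c.vMap w) →
      ∃ g : G, c.liftRel F (c.smulV g w₀) w := by
    intro w hw
    exact exists_smul_liftRel (c := c) (a := w₀) (b := w) (by rw [hw₀]; exact hw)
  refine ⟨Φ, ⟨?_, ?_⟩⟩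
  · intro g w hw
    obtain ⟨g₀, hg₀⟩ := hex w hw
    have h1 : c.liftRel F (c.smulV (g * g₀) w₀) (c.smulV g w) := by
      rw [c.mul_smulV]
      exact liftRel_smul g hg₀
    rw [hspec _ _ h1, hspec _ _ hg₀]
  · intro a b ha hstep
    obtain ⟨g₀, hg₀⟩ := hex a ha
    rw [hspec _ _ hg₀, hspec _ _ (hg₀.tail hstep)]

end GCover
end SerreGraph

namespace SerreGraph
namespace GCover

open Relation Finset

variable {G : Type} [CommGroup G] [Fintype G] {Xt X : SerreGraph}
variable {c : GCover G Xt X}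

section EdgeLift

variable {F : Finset X.Edge} {e : X.Edge} {h₀ : X.H}

/-- Data of a lift of the half-edge `h₀`. -/
lemma exists_lift_h₀ (c : GCover G Xt X) (h₀ : X.H) :
    ∃ ht₀ : Xt.H, c.hMap ht₀ = h₀ ∧ c.vMap (Xt.root ht₀) = X.root h₀ ∧
      c.vMap (Xt.root (Xt.inv ht₀)) = X.root (X.inv h₀) := by
  obtain ⟨w, hw⟩ := exists_lift_vertex (c := c) (X.root h₀)
  obtain ⟨ht₀, h1, h2⟩ := exists_lift_edge (c := c) (w := w) (h := h₀) (by rw [hw])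
  refine ⟨ht₀, h2, by rw [← c.root_hMap, h2], by rw [← c.root_hMap, c.hMap_inv, h2]⟩

/-- Any lift of the edge `e = {h₀, inv h₀}` is a translate of a fixed lift `ht₀`. -/
lemma lift_edge_cases (hh₀ : X.edgeOf h₀ = e) {ht₀ ht : Xt.H}
    (hht₀ : c.hMap ht₀ = h₀) (hte : X.edgeOf (c.hMap ht) = e) :
    (∃ g : G, ht = c.smulH g ht₀) ∨ (∃ g : G, ht = c.smulH g (Xt.inv ht₀)) := by
  have hcases : c.hMap ht = h₀ ∨ c.hMap ht = X.inv h₀ :=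
    edgeOf_eq_iff.1 (by rw [hte, hh₀])
  rcases hcases with hc | hc
  · left
    obtain ⟨g, hg⟩ := smul_eq_of_hMap_eq (c := c) (ht := ht₀) (ht' := ht)
      (by rw [hht₀, hc])
    exact ⟨g, hg.symm⟩
  · right
    obtain ⟨g, hg⟩ := smul_eq_of_hMap_eq (c := c) (ht := Xt.inv ht₀) (ht' := ht)
      (by rw [c.hMap_inv, hht₀, hc])
    exact ⟨g, hg.symm⟩

end EdgeLift

section Bridge

variable {F : Finset X.Edge} {e : X.Edge} {h₀ : X.H}

/-- **Bridge lemma**: if deleting `e` disconnects its endpoints and both pieces are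
trivial, then the whole component (with `e`) is trivial. -/
lemma not_ntv_of_bridge (hh₀ : X.edgeOf h₀ = e) (he : e ∉ F)
    (hB : ¬ X.compRel (insert e F) (X.root h₀) (X.root (X.inv h₀)))
    (hu : ¬ c.Ntv (insert e F) (X.root h₀))
    (hv : ¬ c.Ntv (insert e F) (X.root (X.inv h₀))) :
    ¬ c.Ntv F (X.root h₀) := by
  classical
  set u₀ := X.root h₀ with hu₀
  set v₀ := X.root (X.inv h₀) with hv₀
  obtain ⟨Φu, hΦu⟩ := exists_triv_of_not_ntv hu
  obtain ⟨Φv, hΦv⟩ := exists_triv_of_not_ntv hv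
  obtain ⟨ht₀, hht₀, ha₀, hb₀⟩ := exists_lift_h₀ c h₀
  set a₀ := Xt.root ht₀ with ha₀def
  set b₀ := Xt.root (Xt.inv ht₀) with hb₀def
  set k := (Φv b₀)⁻¹ * Φu a₀ with hk
  set Φ : Xt.V → G := fun w =>
    if X.compRel (insert e F) u₀ (c.vMap w) then Φu w else Φv w * k with hΦdef
  -- both endpoints, downstairs, are joined by `e` in `X ∖ F`
  have hadj : X.compRel F u₀ v₀ :=
    ReflTransGen.single (adjStep_of_edge (by rw [hh₀]; exact he))
  have hΦu_eval : ∀ w : Xt.V, X.compRel (insert e F) u₀ (c.vMap w) → Φ w = Φu w := by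
    intro w hw; rw [hΦdef]; simp only [hw, if_pos]
  have hΦv_eval : ∀ w : Xt.V, ¬ X.compRel (insert e F) u₀ (c.vMap w) → Φ w = Φv w * k := by
    intro w hw; rw [hΦdef]; simp only [hw, if_neg, if_false]
  -- vertices over the `F`-component of `u₀` lie over one of the two pieces
  have hsplit : ∀ w : Xt.V, X.compRel F u₀ (c.vMap w) →
      X.compRel (insert e F) u₀ (c.vMap w) ∨ X.compRel (insert e F) v₀ (c.vMap w) := by
    intro w hw
    rcases compRel_insert_split hh₀ hw with hl | ⟨_, hys⟩
    · exact Or.inl hl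
    · rcases hys with hy | hy
      · exact Or.inl (compRel_symm hy)
      · exact Or.inr (compRel_symm hy)
  have hmaineq : Φv b₀ * k = Φu a₀ := by
    rw [hk, mul_inv_cancel_left]
  have hb₀mem : X.compRel (insert e F) v₀ (c.vMap b₀) := by
    rw [hb₀]; exact compRel_refl _ _
  have ha₀mem : X.compRel (insert e F) u₀ (c.vMap a₀) := by
    rw [ha₀]; exact compRel_refl _ _
  have hb₀notu : ¬ X.compRel (insert e F) u₀ (c.vMap b₀) := by
    rw [hb₀]; exact hB
  apply not_ntv_of_triv (Φ := Φ)
  constructor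
  · -- equivariance
    intro g w hw
    have hvw : c.vMap (c.smulV g w) = c.vMap w := c.vMap_smulV g w
    rcases hsplit w hw with hc1 | hc2
    · rw [hΦu_eval w hc1, hΦu_eval _ (by rw [hvw]; exact hc1)]
      exact hΦu.equiv g w hc1
    · have hnotu : ¬ X.compRel (insert e F) u₀ (c.vMap w) := by
        intro hcon
        exact hB (compRel_trans hcon (compRel_symm hc2))
      rw [hΦv_eval w hnotu, hΦv_eval _ (by rw [hvw]; exact hnotu)]
      rw [hΦv.equiv g w hc2, mul_assoc]
  · -- constancy along edges over `X ∖ F`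
    intro a b ha hstep
    obtain ⟨ht, h1, h2, h3⟩ := hstep
    by_cases hte : X.edgeOf (c.hMap ht) = e
    · -- the step crosses a lift of `e`
      rcases lift_edge_cases hh₀ hht₀ hte with ⟨g, hg⟩ | ⟨g, hg⟩
      · have haeq : a = c.smulV g a₀ := by rw [← h1, hg, c.root_smulH]
        have hbeq : b = c.smulV g b₀ := by
          rw [← h2, hg, ← c.smulH_inv, c.root_smulH]
        have hva : c.vMap a = u₀ := by rw [haeq, c.vMap_smulV, ha₀]
        have hvb : c.vMap b = v₀ := by rw [hbeq, c.vMap_smulV, hb₀]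
        have h5 : Φ a = g * Φu a₀ := by
          rw [haeq, hΦu_eval _ (by rw [c.vMap_smulV, ha₀]; exact compRel_refl _ _)]
          exact hΦu.equiv g a₀ ha₀mem
        have h6 : Φ b = g * Φu a₀ := by
          rw [hbeq, hΦv_eval _ (by rw [c.vMap_smulV]; exact hb₀notu)]
          rw [hΦv.equiv g b₀ hb₀mem, mul_assoc, hmaineq]
        rw [h5, h6]
      · have haeq : a = c.smulV g b₀ := by rw [← h1, hg, c.root_smulH]
        have hbeq : b = c.smulV g a₀ := by
          rw [← h2, hg, ← c.smulH_inv, c.root_smulH, Xt.inv_inv]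
        have h5 : Φ a = g * Φu a₀ := by
          rw [haeq, hΦv_eval _ (by rw [c.vMap_smulV]; exact hb₀notu)]
          rw [hΦv.equiv g b₀ hb₀mem, mul_assoc, hmaineq]
        have h6 : Φ b = g * Φu a₀ := by
          rw [hbeq, hΦu_eval _ (by rw [c.vMap_smulV, ha₀]; exact compRel_refl _ _)]
          exact hΦu.equiv g a₀ ha₀mem
        rw [h5, h6]
    · -- the step stays over `X ∖ (F ∪ e)`
      have hstep' : c.liftStep (insert e F) a b :=
        ⟨ht, h1, h2, by simp only [Finset.mem_insert, not_or]; exact ⟨hte, h3⟩⟩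
      have hab' : X.compRel (insert e F) (c.vMap a) (c.vMap b) :=
        ReflTransGen.single (liftStep_vMap hstep')
      rcases hsplit a ha with hc1 | hc2
      · rw [hΦu_eval a hc1, hΦu_eval b (compRel_trans hc1 hab')]
        exact hΦu.const a b hc1 hstep'
      · have hnotua : ¬ X.compRel (insert e F) u₀ (c.vMap a) := by
          intro hcon
          exact hB (compRel_trans hcon (compRel_symm hc2))
        have hnotub : ¬ X.compRel (insert e F) u₀ (c.vMap b) := by
          intro hcon
          exact hnotua (compRel_trans hcon (compRel_symm hab'))
        rw [hΦv_eval a hnotua, hΦv_eval b hnotub]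
        rw [hΦv.const a b hc2 hstep']

end Bridge

end GCover
end SerreGraph

namespace SerreGraph
namespace GCover

open Relation Finset

variable {G : Type} [CommGroup G] [Fintype G] {Xt X : SerreGraph}
variable {c : GCover G Xt X}

/-- **Persistence lemma**: if the component of `e` is nontrivial but becomes trivial upon
deleting `e`, the same holds after deleting more edges, as long as the endpoints of `e`
remain connected without `e`. -/
lemma ntv_persist {F F'' : Finset X.Edge} {e : X.Edge} {h₀ : X.H}
    (hh₀ : X.edgeOf h₀ = e) (he'' : e ∉ F'') (hFF : F ⊆ F'')
    (hNB'' : X.compRel (insert e F'') (X.root h₀) (X.root (X.inv h₀)))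
    (htriv : ¬ c.Ntv (insert e F) (X.root h₀))
    (hntv : c.Ntv F (X.root h₀)) :
    c.Ntv F'' (X.root h₀) := by
  classical
  set u₀ := X.root h₀ with hu₀
  set v₀ := X.root (X.inv h₀) with hv₀
  have hNB : X.compRel (insert e F) u₀ v₀ :=
    compRel_mono (Finset.insert_subset_insert e hFF) hNB''
  obtain ⟨Φ, hΦ⟩ := exists_triv_of_not_ntv htriv
  obtain ⟨ht₀, hht₀, ha₀, hb₀⟩ := exists_lift_h₀ c h₀
  set a₀ := Xt.root ht₀ with ha₀def
  set b₀ := Xt.root (Xt.inv ht₀) with hb₀def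
  have ha₀mem : X.compRel (insert e F) u₀ (c.vMap a₀) := by
    rw [ha₀]; exact compRel_refl _ _
  have hb₀mem : X.compRel (insert e F) u₀ (c.vMap b₀) := by
    rw [hb₀]; exact hNB
  -- the discrepancy of `Φ` across a lift of `e` is nontrivial
  have hδne : Φ a₀ ≠ Φ b₀ := by
    intro hδ
    apply not_ntv_of_triv (F := F) (v := u₀) (Φ := Φ) ?_ hntv
    have hdom : ∀ x : X.V, X.compRel F u₀ x → X.compRel (insert e F) u₀ x := by
      intro x hx
      rcases compRel_insert_split hh₀ hx with hl | ⟨_, hy⟩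
      · exact hl
      · rcases hy with hy | hy
        · exact compRel_symm hy
        · exact compRel_trans hNB (compRel_symm hy)
    constructor
    · intro g w hw
      exact hΦ.equiv g w (hdom _ hw)
    · intro a b ha hstep
      obtain ⟨ht, h1, h2, h3⟩ := hstep
      by_cases hte : X.edgeOf (c.hMap ht) = e
      · rcases lift_edge_cases hh₀ hht₀ hte with ⟨g, hg⟩ | ⟨g, hg⟩
        · have haeq : a = c.smulV g a₀ := by rw [← h1, hg, c.root_smulH]
          have hbeq : b = c.smulV g b₀ := by
            rw [← h2, hg, ← c.smulH_inv, c.root_smulH]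
          rw [haeq, hbeq, hΦ.equiv g a₀ ha₀mem, hΦ.equiv g b₀ hb₀mem, hδ]
        · have haeq : a = c.smulV g b₀ := by rw [← h1, hg, c.root_smulH]
          have hbeq : b = c.smulV g a₀ := by
            rw [← h2, hg, ← c.smulH_inv, c.root_smulH, Xt.inv_inv]
          rw [haeq, hbeq, hΦ.equiv g a₀ ha₀mem, hΦ.equiv g b₀ hb₀mem, hδ]
      · exact hΦ.const a b (hdom _ ha)
          ⟨ht, h1, h2, by simp only [Finset.mem_insert, not_or]; exact ⟨hte, h3⟩⟩
  -- now suppose the `F''`-component of `u₀` were trivial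
  by_contra hK
  obtain ⟨Φ'', hΦ''⟩ := exists_triv_of_not_ntv hK
  have hsub1 : insert e F ⊆ insert e F'' := Finset.insert_subset_insert e hFF
  have hsub2 : F'' ⊆ insert e F'' := Finset.subset_insert e F''
  -- both are trivializations over the smaller component `X ∖ (F'' ∪ e)`
  have hΦT : IsTrivialization c (insert e F'') u₀ Φ :=
    ⟨fun g w hw => hΦ.equiv g w (compRel_mono hsub1 hw),
     fun a b ha hstep => hΦ.const a b (compRel_mono hsub1 ha) (liftStep_mono hsub1 hstep)⟩
  have hΦ''T : IsTrivialization c (insert e F'') u₀ Φ'' :=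
    ⟨fun g w hw => hΦ''.equiv g w (compRel_mono hsub2 hw),
     fun a b ha hstep => hΦ''.const a b (compRel_mono hsub2 ha) (liftStep_mono hsub2 hstep)⟩
  set ψ : Xt.V → G := fun w => (Φ w)⁻¹ * Φ'' w with hψdef
  have hψs : ∀ (g : G) (w : Xt.V), X.compRel (insert e F'') u₀ (c.vMap w) →
      ψ (c.smulV g w) = ψ w := by
    intro g w hw
    rw [hψdef]
    simp only []
    rw [hΦT.equiv g w hw, hΦ''T.equiv g w hw, mul_inv_rev, mul_assoc,
      inv_mul_cancel_left]
  have hψc : ∀ a b : Xt.V, c.liftRel (insert e F'') a b →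
      X.compRel (insert e F'') u₀ (c.vMap a) → ψ a = ψ b := by
    intro a b hab ha
    rw [hψdef]
    simp only []
    rw [hΦT.const_liftRel a b hab ha, hΦ''T.const_liftRel a b hab ha]
  have ha₀mem'' : X.compRel (insert e F'') u₀ (c.vMap a₀) := by
    rw [ha₀]; exact compRel_refl _ _
  obtain ⟨g, hg⟩ := exists_smul_liftRel (c := c) (F := insert e F'') (a := a₀) (b := b₀)
    (by rw [ha₀, hb₀]; exact hNB'')
  have hψab : ψ a₀ = ψ b₀ := by
    have h1 : ψ (c.smulV g a₀) = ψ a₀ := hψs g a₀ ha₀mem''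
    have h2 : ψ (c.smulV g a₀) = ψ b₀ :=
      hψc _ _ hg (by rw [c.vMap_smulV, ha₀]; exact compRel_refl _ _)
    rw [← h1, h2]
  -- but `Φ''` is constant across `e` itself, since `e ∉ F''`
  have hδ'' : Φ'' a₀ = Φ'' b₀ :=
    hΦ''.const a₀ b₀ (by rw [ha₀]; exact compRel_refl _ _)
      ⟨ht₀, rfl, rfl, by rw [hht₀, hh₀]; exact he''⟩
  rw [hψdef] at hψab
  simp only [] at hψab
  rw [hδ''] at hψab
  exact hδne (inv_injective (mul_right_cancel hψab))

end GCover
end SerreGraph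

namespace SerreGraph
namespace GCover

open Relation Finset
open scoped Classical

variable {G : Type} [CommGroup G] [Fintype G] {Xt X : SerreGraph}
variable {c : GCover G Xt X}

/-- Triviality of a component, given by its vertex set. -/
def TrivC (c : GCover G Xt X) (F : Finset X.Edge) (C : Finset X.V) : Prop :=
  ∃ v : X.V, C = X.compVerts F v ∧ ¬ c.Ntv F v

/-- The number of trivial components of `X ∖ F`. -/
noncomputable def beta (c : GCover G Xt X) (F : Finset X.Edge) : ℕ :=
  ((X.components F).filter (fun C => c.TrivC F C)).card

lemma trivC_compVerts {F : Finset X.Edge} {v : X.V} :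
    c.TrivC F (X.compVerts F v) ↔ ¬ c.Ntv F v := by
  constructor
  · rintro ⟨x, hx, hnx⟩
    have hvx : X.compRel F x v := by
      have : v ∈ X.compVerts F x := by rw [← hx]; exact mem_compVerts_self F v
      exact mem_compVerts.1 this
    intro hv
    exact hnx (ntv_of_compRel (compRel_symm hvx) hv)
  · intro h
    exact ⟨v, rfl, h⟩

lemma compVerts_mem_components (F : Finset X.Edge) (v : X.V) :
    X.compVerts F v ∈ X.components F :=
  Finset.mem_image.2 ⟨v, Finset.mem_univ v, rfl⟩

lemma mem_components_iff {F : Finset X.Edge} {C : Finset X.V} :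
    C ∈ X.components F ↔ ∃ v : X.V, C = X.compVerts F v := by
  simp only [SerreGraph.components, Finset.mem_image, Finset.mem_univ, true_and]
  exact ⟨fun ⟨v, hv⟩ => ⟨v, hv.symm⟩, fun ⟨v, hv⟩ => ⟨v, hv.symm⟩⟩

lemma beta_eq_zero_iff {F : Finset X.Edge} : c.beta F = 0 ↔ ∀ v : X.V, c.Ntv F v := by
  rw [beta, Finset.card_eq_zero, Finset.filter_eq_empty_iff]
  constructor
  · intro h v
    by_contra hv
    exact h (compVerts_mem_components F v) (trivC_compVerts.2 hv)
  · rintro h C hC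
    obtain ⟨v, rfl⟩ := mem_components_iff.1 hC
    rw [trivC_compVerts]
    exact fun hv => hv (h v)

section LocalFormula

variable {F : Finset X.Edge} {e : X.Edge} {h₀ : X.H}

/-- The components of `X ∖ F` not containing the root of `h₀`. -/
noncomputable def aw (F : Finset X.Edge) (h₀ : X.H) : Finset (Finset X.V) :=
  (X.components F).filter (fun C => X.root h₀ ∉ C)

lemma components_decomp (F : Finset X.Edge) (h₀ : X.H) :
    X.components F = insert (X.compVerts F (X.root h₀)) (aw F h₀) := by
  ext C
  constructor
  · intro hC
    obtain ⟨x, rfl⟩ := mem_components_iff.1 hC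
    by_cases hx : X.compRel F x (X.root h₀)
    · rw [Finset.mem_insert]
      exact Or.inl (compVerts_eq_of_rel hx)
    · rw [Finset.mem_insert]
      refine Or.inr (Finset.mem_filter.2 ⟨hC, ?_⟩)
      rw [mem_compVerts]
      exact hx
  · intro hC
    rcases Finset.mem_insert.1 hC with rfl | hC
    · exact compVerts_mem_components F _
    · exact (Finset.mem_filter.1 hC).1

lemma compVerts_root_not_mem_aw (F : Finset X.Edge) (h₀ : X.H) :
    X.compVerts F (X.root h₀) ∉ aw F h₀ := by
  intro h
  exact (Finset.mem_filter.1 h).2 (mem_compVerts_self F _)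

lemma beta_formula (c : GCover G Xt X) (F : Finset X.Edge) (h₀ : X.H) :
    c.beta F = ((aw F h₀).filter (fun C => c.TrivC F C)).card +
      (if c.Ntv F (X.root h₀) then 0 else 1) := by
  rw [beta, components_decomp F h₀, Finset.filter_insert]
  by_cases h : c.Ntv F (X.root h₀)
  · rw [if_neg (fun hc => (trivC_compVerts.1 hc) h), if_pos h, Nat.add_zero]
  · rw [if_pos (trivC_compVerts.2 h), if_neg h,
      Finset.card_insert_of_notMem (fun hc =>
        compVerts_root_not_mem_aw F h₀ (Finset.mem_filter.1 hc).1)]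

lemma aw_spec (hh₀ : X.edgeOf h₀ = e) (he : e ∉ F) {C : Finset X.V} (hC : C ∈ aw F h₀) :
    ∃ x : X.V, C = X.compVerts F x ∧ ¬ X.compRel F x (X.root h₀) ∧
      C = X.compVerts (insert e F) x ∧ X.root (X.inv h₀) ∉ C := by
  obtain ⟨hC1, hC2⟩ := Finset.mem_filter.1 hC
  obtain ⟨x, rfl⟩ := mem_components_iff.1 hC1
  have hx : ¬ X.compRel F x (X.root h₀) := fun h => hC2 (mem_compVerts.2 h)
  refine ⟨x, rfl, hx, (compVerts_insert_of_away hh₀ he hx).symm, ?_⟩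
  intro hmem
  refine hx (compRel_trans (mem_compVerts.1 hmem) ?_)
  exact compRel_symm (ReflTransGen.single (adjStep_of_edge (by rw [hh₀]; exact he)))

lemma aw_subset_components_insert (hh₀ : X.edgeOf h₀ = e) (he : e ∉ F) :
    aw F h₀ ⊆ X.components (insert e F) := by
  intro C hC
  obtain ⟨x, _, _, hC', _⟩ := aw_spec hh₀ he hC
  rw [hC']
  exact compVerts_mem_components _ _

lemma filter_triv_aw_eq (hh₀ : X.edgeOf h₀ = e) (he : e ∉ F) :
    (aw F h₀).filter (fun C => c.TrivC F C) =
      (aw F h₀).filter (fun C => c.TrivC (insert e F) C) := by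
  apply Finset.filter_congr
  intro C hC
  obtain ⟨x, hC1, hx, hC2, _⟩ := aw_spec hh₀ he hC
  constructor
  · intro h
    rw [hC1] at h
    rw [hC2, trivC_compVerts]
    rw [trivC_compVerts] at h
    intro hcon
    exact h ((ntv_insert_iff_away hh₀ he hx).2 hcon)
  · intro h
    rw [hC2] at h
    rw [hC1, trivC_compVerts]
    rw [trivC_compVerts] at h
    intro hcon
    exact h ((ntv_insert_iff_away hh₀ he hx).1 hcon)

lemma mem_aw_of_insert (hh₀ : X.edgeOf h₀ = e) (he : e ∉ F) {x : X.V}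
    (hxu : ¬ X.compRel (insert e F) x (X.root h₀))
    (hxv : ¬ X.compRel (insert e F) x (X.root (X.inv h₀))) :
    X.compVerts (insert e F) x ∈ aw F h₀ ∧
      X.compVerts (insert e F) x = X.compVerts F x := by
  have hx : ¬ X.compRel F x (X.root h₀) := by
    intro h
    rcases compRel_insert_reach hh₀ h with h' | h'
    · exact hxu h'
    · exact hxv h'
  have hEq := compVerts_insert_of_away hh₀ he hx
  constructor
  · refine Finset.mem_filter.2 ⟨?_, ?_⟩
    · rw [hEq]; exact compVerts_mem_components F x
    · rw [hEq, mem_compVerts]; exact hx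
  · exact hEq

lemma components_insert_NB (hh₀ : X.edgeOf h₀ = e) (he : e ∉ F)
    (hNB : X.compRel (insert e F) (X.root h₀) (X.root (X.inv h₀))) :
    X.components (insert e F) = insert (X.compVerts (insert e F) (X.root h₀)) (aw F h₀) := by
  ext C
  constructor
  · intro hC
    obtain ⟨x, rfl⟩ := mem_components_iff.1 hC
    rw [Finset.mem_insert]
    by_cases hxu : X.compRel (insert e F) x (X.root h₀)
    · exact Or.inl (compVerts_eq_of_rel hxu)
    · by_cases hxv : X.compRel (insert e F) x (X.root (X.inv h₀))
      · exact Or.inl ((compVerts_eq_of_rel hxv).trans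
          (compVerts_eq_of_rel (compRel_symm hNB)))
      · exact Or.inr (mem_aw_of_insert hh₀ he hxu hxv).1
  · intro hC
    rcases Finset.mem_insert.1 hC with rfl | hC
    · exact compVerts_mem_components _ _
    · exact aw_subset_components_insert hh₀ he hC

lemma compVerts_insert_root_not_mem_aw (hh₀ : X.edgeOf h₀ = e) (he : e ∉ F) :
    X.compVerts (insert e F) (X.root h₀) ∉ aw F h₀ := by
  intro h
  exact (Finset.mem_filter.1 h).2 (mem_compVerts_self _ _)

lemma components_insert_B (hh₀ : X.edgeOf h₀ = e) (he : e ∉ F)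
    (hB : ¬ X.compRel (insert e F) (X.root h₀) (X.root (X.inv h₀))) :
    X.components (insert e F) = insert (X.compVerts (insert e F) (X.root h₀))
      (insert (X.compVerts (insert e F) (X.root (X.inv h₀))) (aw F h₀)) := by
  ext C
  constructor
  · intro hC
    obtain ⟨x, rfl⟩ := mem_components_iff.1 hC
    rw [Finset.mem_insert, Finset.mem_insert]
    by_cases hxu : X.compRel (insert e F) x (X.root h₀)
    · exact Or.inl (compVerts_eq_of_rel hxu)
    · by_cases hxv : X.compRel (insert e F) x (X.root (X.inv h₀))
      · exact Or.inr (Or.inl (compVerts_eq_of_rel hxv))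
      · exact Or.inr (Or.inr (mem_aw_of_insert hh₀ he hxu hxv).1)
  · intro hC
    rcases Finset.mem_insert.1 hC with rfl | hC
    · exact compVerts_mem_components _ _
    · rcases Finset.mem_insert.1 hC with rfl | hC
      · exact compVerts_mem_components _ _
      · exact aw_subset_components_insert hh₀ he hC

lemma v_not_mem_aw_member (hh₀ : X.edgeOf h₀ = e) (he : e ∉ F) {C : Finset X.V}
    (hC : C ∈ aw F h₀) : X.root (X.inv h₀) ∉ C :=
  (aw_spec hh₀ he hC).choose_spec.2.2.2

lemma compVerts_insert_v_not_mem_aw (hh₀ : X.edgeOf h₀ = e) (he : e ∉ F) :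
    X.compVerts (insert e F) (X.root (X.inv h₀)) ∉ aw F h₀ := by
  intro h
  have hv : X.root (X.inv h₀) ∈ X.compVerts (insert e F) (X.root (X.inv h₀)) :=
    mem_compVerts_self _ _
  exact v_not_mem_aw_member hh₀ he h hv

end LocalFormula

end GCover
end SerreGraph

namespace SerreGraph
namespace GCover

open Relation Finset
open scoped Classical

variable {G : Type} [CommGroup G] [Fintype G] {Xt X : SerreGraph}
variable {c : GCover G Xt X}

section InsertFormulas

variable {F : Finset X.Edge} {e : X.Edge} {h₀ : X.H}

lemma beta_insert_NB (hh₀ : X.edgeOf h₀ = e) (he : e ∉ F)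
    (hNB : X.compRel (insert e F) (X.root h₀) (X.root (X.inv h₀))) :
    c.beta (insert e F) = ((aw F h₀).filter (fun C => c.TrivC (insert e F) C)).card +
      (if c.Ntv (insert e F) (X.root h₀) then 0 else 1) := by
  rw [beta, components_insert_NB hh₀ he hNB, Finset.filter_insert]
  by_cases h : c.Ntv (insert e F) (X.root h₀)
  · rw [if_neg (fun hc => (trivC_compVerts.1 hc) h), if_pos h, Nat.add_zero]
  · rw [if_pos (trivC_compVerts.2 h), if_neg h,
      Finset.card_insert_of_notMem (fun hc =>
        compVerts_insert_root_not_mem_aw hh₀ he (Finset.mem_filter.1 hc).1)]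

lemma beta_insert_B (hh₀ : X.edgeOf h₀ = e) (he : e ∉ F)
    (hB : ¬ X.compRel (insert e F) (X.root h₀) (X.root (X.inv h₀))) :
    c.beta (insert e F) = ((aw F h₀).filter (fun C => c.TrivC (insert e F) C)).card +
      (if c.Ntv (insert e F) (X.root h₀) then 0 else 1) +
      (if c.Ntv (insert e F) (X.root (X.inv h₀)) then 0 else 1) := by
  have hne : X.compVerts (insert e F) (X.root h₀) ≠
      X.compVerts (insert e F) (X.root (X.inv h₀)) := by
    intro heq
    apply hB
    have : X.root (X.inv h₀) ∈ X.compVerts (insert e F) (X.root h₀) := by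
      rw [heq]; exact mem_compVerts_self _ _
    exact mem_compVerts.1 this
  have hCu : ∀ s : Finset (Finset X.V), s ⊆ (aw F h₀) →
      X.compVerts (insert e F) (X.root h₀) ∉
        insert (X.compVerts (insert e F) (X.root (X.inv h₀))) s := by
    intro s hs hmem
    rcases Finset.mem_insert.1 hmem with h | h
    · exact hne h
    · exact compVerts_insert_root_not_mem_aw hh₀ he (hs h)
  have hCv : ∀ s : Finset (Finset X.V), s ⊆ (aw F h₀) →
      X.compVerts (insert e F) (X.root (X.inv h₀)) ∉ s := by
    intro s hs hmem
    exact compVerts_insert_v_not_mem_aw hh₀ he (hs hmem)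
  rw [beta, components_insert_B hh₀ he hB, Finset.filter_insert, Finset.filter_insert]
  by_cases hu : c.Ntv (insert e F) (X.root h₀) <;>
    by_cases hv : c.Ntv (insert e F) (X.root (X.inv h₀))
  · rw [if_neg (fun hc => (trivC_compVerts.1 hc) hu),
      if_neg (fun hc => (trivC_compVerts.1 hc) hv), if_pos hu, if_pos hv]
    omega
  · rw [if_neg (fun hc => (trivC_compVerts.1 hc) hu), if_pos (trivC_compVerts.2 hv),
      if_pos hu, if_neg hv,
      Finset.card_insert_of_notMem (hCv _ (Finset.filter_subset _ _))]
  · rw [if_pos (trivC_compVerts.2 hu), if_neg (fun hc => (trivC_compVerts.1 hc) hv),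
      if_neg hu, if_pos hv,
      Finset.card_insert_of_notMem (fun hc =>
        compVerts_insert_root_not_mem_aw hh₀ he (Finset.mem_filter.1 hc).1)]
  · rw [if_pos (trivC_compVerts.2 hu), if_pos (trivC_compVerts.2 hv),
      if_neg hu, if_neg hv,
      Finset.card_insert_of_notMem (by
        apply hCu
        exact Finset.filter_subset _ _),
      Finset.card_insert_of_notMem (hCv _ (Finset.filter_subset _ _))]

end InsertFormulas

section P2P3

variable {F F'' : Finset X.Edge} {e : X.Edge}

/-- (P2): deleting one more edge changes the number of trivial components by 0 or 1. -/
lemma beta_insert_cases (c : GCover G Xt X) (he : e ∉ F) :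
    c.beta (insert e F) = c.beta F ∨ c.beta (insert e F) = c.beta F + 1 := by
  obtain ⟨h₀, hh₀⟩ := X.edgeOf_surjective e
  have hm := filter_triv_aw_eq (c := c) hh₀ he
  have hF := beta_formula c F h₀
  have hadj : X.compRel F (X.root h₀) (X.root (X.inv h₀)) :=
    ReflTransGen.single (adjStep_of_edge (by rw [hh₀]; exact he))
  have hmonou : ¬ c.Ntv F (X.root h₀) → ¬ c.Ntv (insert e F) (X.root h₀) :=
    fun h hcon => h (ntv_mono (Finset.subset_insert e F) hcon)
  have hmonov : ¬ c.Ntv F (X.root h₀) → ¬ c.Ntv (insert e F) (X.root (X.inv h₀)) :=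
    fun h hcon => h (ntv_of_compRel (compRel_symm hadj)
      (ntv_mono (Finset.subset_insert e F) hcon))
  by_cases hNB : X.compRel (insert e F) (X.root h₀) (X.root (X.inv h₀))
  · rw [beta_insert_NB hh₀ he hNB, ← hm, hF]
    by_cases hu : c.Ntv F (X.root h₀)
    · by_cases hu' : c.Ntv (insert e F) (X.root h₀)
      · rw [if_pos hu, if_pos hu']; left; rfl
      · rw [if_pos hu, if_neg hu']; right; omega
    · rw [if_neg hu, if_neg (hmonou hu)]; left; rfl
  · rw [beta_insert_B hh₀ he hNB, ← hm, hF]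
    by_cases hu : c.Ntv F (X.root h₀)
    · by_cases hu' : c.Ntv (insert e F) (X.root h₀) <;>
        by_cases hv' : c.Ntv (insert e F) (X.root (X.inv h₀))
      · rw [if_pos hu, if_pos hu', if_pos hv']; left; rfl
      · rw [if_pos hu, if_pos hu', if_neg hv']; right; omega
      · rw [if_pos hu, if_neg hu', if_pos hv']; right; omega
      · exact absurd (not_ntv_of_bridge hh₀ he hNB hu' hv') (fun h => h hu)
    · rw [if_neg hu, if_neg (hmonou hu), if_neg (hmonov hu)]; right; omega
  
/-- (P3): a deletion that creates a trivial component keeps doing so after further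
deletions. -/
lemma beta_insert_persist (c : GCover G Xt X) (hFF : F ⊆ F'') (he'' : e ∉ F'')
    (hstep : c.beta (insert e F) = c.beta F + 1) :
    c.beta (insert e F'') = c.beta F'' + 1 := by
  obtain ⟨h₀, hh₀⟩ := X.edgeOf_surjective e
  have he : e ∉ F := fun h => he'' (hFF h)
  have hm := filter_triv_aw_eq (c := c) (F := F) hh₀ he
  have hm'' := filter_triv_aw_eq (c := c) (F := F'') hh₀ he''
  have hF := beta_formula c F h₀
  have hF'' := beta_formula c F'' h₀
  have hsub1 : insert e F ⊆ insert e F'' := Finset.insert_subset_insert e hFF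
  have hadj'' : X.compRel F'' (X.root h₀) (X.root (X.inv h₀)) :=
    ReflTransGen.single (adjStep_of_edge (by rw [hh₀]; exact he''))
  -- extract: some endpoint's piece is trivial after deleting e from F
  have hT : ¬ c.Ntv (insert e F) (X.root h₀) ∨ ¬ c.Ntv (insert e F) (X.root (X.inv h₀)) := by
    by_cases hNB : X.compRel (insert e F) (X.root h₀) (X.root (X.inv h₀))
    · rw [beta_insert_NB hh₀ he hNB, ← hm, hF] at hstep
      by_cases hu' : c.Ntv (insert e F) (X.root h₀)
      · exfalso
        rw [if_pos hu'] at hstep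
        by_cases hu : c.Ntv F (X.root h₀)
        · rw [if_pos hu] at hstep; omega
        · rw [if_neg hu] at hstep; omega
      · exact Or.inl hu'
    · rw [beta_insert_B hh₀ he hNB, ← hm, hF] at hstep
      by_cases hu' : c.Ntv (insert e F) (X.root h₀)
      · by_cases hv' : c.Ntv (insert e F) (X.root (X.inv h₀))
        · exfalso
          rw [if_pos hu', if_pos hv'] at hstep
          by_cases hu : c.Ntv F (X.root h₀)
          · rw [if_pos hu] at hstep; omega
          · rw [if_neg hu] at hstep; omega
        · exact Or.inr hv'
      · exact Or.inl hu'
  have hT'' : ¬ c.Ntv (insert e F'') (X.root h₀) ∨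
      ¬ c.Ntv (insert e F'') (X.root (X.inv h₀)) := by
    rcases hT with h | h
    · exact Or.inl (fun hcon => h (ntv_mono hsub1 hcon))
    · exact Or.inr (fun hcon => h (ntv_mono hsub1 hcon))
  by_cases hNB'' : X.compRel (insert e F'') (X.root h₀) (X.root (X.inv h₀))
  · -- non-bridge at F'': hence non-bridge at F, and the extraction is stronger
    have hNB : X.compRel (insert e F) (X.root h₀) (X.root (X.inv h₀)) :=
      compRel_mono hsub1 hNB''
    have hextract : ¬ c.Ntv (insert e F) (X.root h₀) ∧ c.Ntv F (X.root h₀) := by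
      rw [beta_insert_NB hh₀ he hNB, ← hm, hF] at hstep
      by_cases hu' : c.Ntv (insert e F) (X.root h₀)
      · exfalso
        rw [if_pos hu'] at hstep
        by_cases hu : c.Ntv F (X.root h₀)
        · rw [if_pos hu] at hstep; omega
        · rw [if_neg hu] at hstep; omega
      · refine ⟨hu', ?_⟩
        by_cases hu : c.Ntv F (X.root h₀)
        · exact hu
        · exfalso; rw [if_neg hu', if_neg hu] at hstep; omega
    have hntvF'' : c.Ntv F'' (X.root h₀) :=
      ntv_persist hh₀ he'' hFF hNB'' hextract.1 hextract.2
    have hnot'' : ¬ c.Ntv (insert e F'') (X.root h₀) :=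
      fun hcon => hextract.1 (ntv_mono hsub1 hcon)
    rw [beta_insert_NB hh₀ he'' hNB'', ← hm'', hF'', if_neg hnot'', if_pos hntvF'']
  · -- bridge at F''
    rw [beta_insert_B hh₀ he'' hNB'', ← hm'', hF'']
    by_cases hu : c.Ntv F'' (X.root h₀)
    · by_cases hu' : c.Ntv (insert e F'') (X.root h₀) <;>
        by_cases hv' : c.Ntv (insert e F'') (X.root (X.inv h₀))
      · rcases hT'' with h | h
        · exact absurd hu' h
        · exact absurd hv' h
      · rw [if_pos hu, if_pos hu', if_neg hv']
      · rw [if_pos hu, if_neg hu', if_pos hv']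
      · exact absurd (not_ntv_of_bridge hh₀ he'' hNB'' hu' hv') (fun h => h hu)
    · have hu' : ¬ c.Ntv (insert e F'') (X.root h₀) :=
        fun hcon => hu (ntv_mono (Finset.subset_insert e F'') hcon)
      have hv' : ¬ c.Ntv (insert e F'') (X.root (X.inv h₀)) :=
        fun hcon => hu (ntv_of_compRel (compRel_symm hadj'')
          (ntv_mono (Finset.subset_insert e F'') hcon))
      rw [if_neg hu, if_neg hu', if_neg hv']

end P2P3

end GCover
end SerreGraph

namespace SerreGraph
namespace GCover

open Relation Finset
open scoped Classical

variable {G : Type} [CommGroup G] [Fintype G] {Xt X : SerreGraph}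
variable {c : GCover G Xt X}

/-- (P4): if each single deletion creates a new trivial component, so does deleting all. -/
lemma beta_union (c : GCover G Xt X) (F₀ : Finset X.Edge) (L : Finset X.Edge)
    (hd : Disjoint F₀ L)
    (h : ∀ x ∈ L, c.beta (insert x F₀) = c.beta F₀ + 1) :
    c.beta (F₀ ∪ L) = c.beta F₀ + L.card := by
  induction L using Finset.induction_on with
  | empty => simp
  | @insert x L hx ih =>
      have hd' : Disjoint F₀ L :=
        Finset.disjoint_of_subset_right (Finset.subset_insert x L) hd
      have hxF₀ : x ∉ F₀ := by
        intro hcon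
        exact (Finset.disjoint_left.1 hd) hcon (Finset.mem_insert_self x L)
      have hxU : x ∉ F₀ ∪ L := by
        simp only [Finset.mem_union, not_or]
        exact ⟨hxF₀, hx⟩
      have hun : F₀ ∪ insert x L = insert x (F₀ ∪ L) := by
        rw [Finset.union_insert]
      rw [hun, beta_insert_persist c Finset.subset_union_left hxU
          (h x (Finset.mem_insert_self x L)),
        ih hd' (fun y hy => h y (Finset.mem_insert_of_mem hy)),
        Finset.card_insert_of_notMem hx]
      omega

/-- (P5): the number of trivial components grows at most by the number of deleted edges. -/
lemma beta_union_le (c : GCover G Xt X) (F₀ : Finset X.Edge) (L : Finset X.Edge) :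
    c.beta (F₀ ∪ L) ≤ c.beta F₀ + L.card := by
  induction L using Finset.induction_on with
  | empty => simp
  | @insert x L hx ih =>
      have hun : F₀ ∪ insert x L = insert x (F₀ ∪ L) := by
        rw [Finset.union_insert]
      rw [hun]
      by_cases hxU : x ∈ F₀ ∪ L
      · rw [Finset.insert_eq_self.2 hxU]
        calc c.beta (F₀ ∪ L) ≤ c.beta F₀ + L.card := ih
        _ ≤ c.beta F₀ + (insert x L).card :=
          Nat.add_le_add_left (Finset.card_le_card (Finset.subset_insert x L)) _
      · rcases beta_insert_cases c hxU with h | h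
        · rw [h]
          calc c.beta (F₀ ∪ L) ≤ c.beta F₀ + L.card := ih
          _ ≤ c.beta F₀ + (insert x L).card :=
            Nat.add_le_add_left (Finset.card_le_card (Finset.subset_insert x L)) _
        · rw [h, Finset.card_insert_of_notMem hx]
          omega

lemma one_mem_dilation (c : GCover G Xt X) (v : X.V) : (1 : G) ∈ c.dilation v :=
  fun w _ => c.one_smulV w

lemma ntv_univ_iff {v : X.V} :
    c.Ntv (Finset.univ : Finset X.Edge) v ↔ c.dilation v ≠ {1} := by
  constructor
  · rintro ⟨w, g, hw, hg, hrel⟩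
    have hfix : c.smulV g w = w := (liftRel_univ hrel).symm
    have hdil : g ∈ c.dilation v := by
      intro w' hw'
      obtain ⟨k, hk⟩ := c.vertex_trans w w' (by rw [hw, hw'])
      calc c.smulV g w' = c.smulV g (c.smulV k w) := by rw [hk]
      _ = c.smulV (g * k) w := by rw [c.mul_smulV]
      _ = c.smulV (k * g) w := by rw [mul_comm]
      _ = c.smulV k (c.smulV g w) := by rw [c.mul_smulV]
      _ = c.smulV k w := by rw [hfix]
      _ = w' := hk
    intro heq
    rw [heq] at hdil
    exact hg hdil
  · intro hD
    have hex : ∃ g ∈ c.dilation v, g ≠ 1 := by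
      by_contra hcon
      push_neg at hcon
      exact hD (Set.eq_singleton_iff_unique_mem.2 ⟨one_mem_dilation c v, hcon⟩)
    obtain ⟨g, hg, hgne⟩ := hex
    obtain ⟨w, hw⟩ := exists_lift_vertex (c := c) v
    refine ⟨w, g, hw, hgne, ?_⟩
    rw [hg w hw]
    exact liftRel_refl _ _

lemma beta_univ_eq (c : GCover G Xt X) :
    c.beta (Finset.univ : Finset X.Edge) +
      (Finset.univ.filter (fun v : X.V => c.dilation v ≠ {1})).card =
      Fintype.card X.V := by
  have hcomp : X.components (Finset.univ : Finset X.Edge) =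
      Finset.univ.image (fun v : X.V => ({v} : Finset X.V)) := by
    apply Finset.image_congr
    intro v _
    exact compVerts_univ v
  have hbeta : c.beta (Finset.univ : Finset X.Edge) =
      (Finset.univ.filter (fun v : X.V => ¬ (c.dilation v ≠ {1}))).card := by
    rw [beta, hcomp, Finset.filter_image]
    rw [Finset.card_image_of_injective _ Finset.singleton_injective]
    congr 1
    apply Finset.filter_congr
    intro v _
    have h1 : ({v} : Finset X.V) = X.compVerts (Finset.univ : Finset X.Edge) v :=
      (compVerts_univ v).symm
    rw [h1, trivC_compVerts, ntv_univ_iff]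
  rw [hbeta, Nat.add_comm]
  exact Finset.card_filter_add_card_filter_not _

end GCover
end SerreGraph

open SerreGraph in
/-- **Proposition.** Let `p : X̃ → X` be a nontrivial harmonic `G`-cover with abelian
Galois group `G`. The sets `F ⊆ E(X)` all of whose complementary connected components are
`G`-nontrivial form the independent sets of a matroid `M*(X̃/X)` on ground set `E(X)`, of
rank `g(X) - 1 + |{v : D(v) ≠ 0}|` (i.e. every base `B` satisfies
`|B| + |V(X)| = |E(X)| + |{v : D(v) ≠ 0}|`). -/
theorem exists_matroid_of_cover
    (G : Type) [CommGroup G] [Fintype G] (X Xt : SerreGraph)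
    (hX : X.Connected) (c : GCover G Xt X)
    (hnontrivial : ∀ v : X.V, c.GNontrivialAt ∅ v) :
    ∃ M : Matroid X.Edge, M.E = Set.univ ∧
      (∀ I : Finset X.Edge, M.Indep ↑I ↔ ∀ v : X.V, c.GNontrivialAt I v) ∧
      (∀ B : Finset X.Edge, M.IsBase ↑B →
        B.card + Fintype.card X.V =
          Fintype.card X.Edge + Set.ncard {v : X.V | c.dilation v ≠ {1}}) := by
  classical
  set IndepF : Finset X.Edge → Prop := fun I => ∀ v : X.V, c.Ntv I v with hIndepF
  have hhered : ∀ ⦃I J : Finset X.Edge⦄, IndepF J → I ⊆ J → IndepF I :=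
    fun I J hJ hIJ v => GCover.ntv_mono hIJ (hJ v)
  have hempty : IndepF ∅ :=
    fun v => (GCover.gNontrivialAt_iff_ntv).1 (hnontrivial v)
  have haug : ∀ ⦃I J : Finset X.Edge⦄, IndepF I → IndepF J → I.card < J.card →
      ∃ e ∈ J, e ∉ I ∧ IndepF (insert e I) := by
    intro I J hI hJ hcard
    by_contra hcon
    push_neg at hcon
    have hI0 : c.beta I = 0 := GCover.beta_eq_zero_iff.2 hI
    have hJ0 : c.beta J = 0 := GCover.beta_eq_zero_iff.2 hJ
    have hstep : ∀ x ∈ J \ I, c.beta (insert x I) = c.beta I + 1 := by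
      intro x hx
      rw [Finset.mem_sdiff] at hx
      have h1 : ¬ IndepF (insert x I) := hcon x hx.1 hx.2
      have h2 : c.beta (insert x I) ≠ 0 :=
        fun h0 => h1 (fun v => GCover.beta_eq_zero_iff.1 h0 v)
      rcases GCover.beta_insert_cases c hx.2 with h | h
      · rw [h, hI0] at h2; exact absurd rfl h2
      · exact h
    have h4 := GCover.beta_union c I (J \ I) Finset.disjoint_sdiff hstep
    rw [Finset.union_sdiff_self_eq_union, hI0] at h4
    have h5 := GCover.beta_union_le c J (I \ J)
    rw [Finset.union_sdiff_self_eq_union, hJ0, Finset.union_comm J I] at h5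
    have h6 : (J \ I).card ≤ (I \ J).card := by omega
    have h7 := Finset.card_sdiff_add_card_inter J I
    have h8 := Finset.card_sdiff_add_card_inter I J
    rw [Finset.inter_comm I J] at h8
    omega
  set IM := IndepMatroid.ofFinset (Set.univ : Set X.Edge) IndepF hempty hhered haug
    (fun I _ => Set.subset_univ _) with hIM
  have hIndepIff : ∀ I : Finset X.Edge, IM.matroid.Indep ↑I ↔ IndepF I := by
    intro I
    rw [IndepMatroid.matroid_indep_iff, hIM, IndepMatroid.ofFinset_indep]
  refine ⟨IM.matroid, ?_, ?_, ?_⟩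
  · rw [IndepMatroid.matroid_E, hIM, IndepMatroid.ofFinset_E]
  · intro I
    rw [hIndepIff I]
    exact forall_congr' (fun v => (GCover.gNontrivialAt_iff_ntv).symm)
  · intro B hB
    have hBi : IndepF B := (hIndepIff B).1 hB.indep
    have hB0 : c.beta B = 0 := GCover.beta_eq_zero_iff.2 hBi
    have hmax : ∀ e : X.Edge, e ∉ B → ¬ IndepF (insert e B) := by
      intro e he hcon
      have hIns : IM.matroid.Indep ↑(insert e B) := (hIndepIff _).2 hcon
      have heq : (B : Set X.Edge) = ↑(insert e B) :=
        hB.eq_of_subset_indep hIns (by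
          rw [Finset.coe_subset]
          exact Finset.subset_insert e B)
      have : e ∈ B := by
        have : (e : X.Edge) ∈ (B : Set X.Edge) := by
          rw [heq, Finset.coe_insert]
          exact Set.mem_insert e ↑B
        exact_mod_cast this
      exact he this
    have hstep : ∀ x ∈ Bᶜ, c.beta (insert x B) = c.beta B + 1 := by
      intro x hx
      rw [Finset.mem_compl] at hx
      have h1 : ¬ IndepF (insert x B) := hmax x hx
      have h2 : c.beta (insert x B) ≠ 0 :=
        fun h0 => h1 (fun v => GCover.beta_eq_zero_iff.1 h0 v)
      rcases GCover.beta_insert_cases c hx with h | h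
      · rw [h, hB0] at h2; exact absurd rfl h2
      · exact h
    have h4 := GCover.beta_union c B Bᶜ disjoint_compl_right hstep
    rw [Finset.union_compl, hB0] at h4
    have h5 := GCover.beta_univ_eq c
    have h6 : Bᶜ.card = Fintype.card X.Edge - B.card := Finset.card_compl B
    have h7 : B.card ≤ Fintype.card X.Edge := Finset.card_le_univ B
    have hncard : Set.ncard {v : X.V | c.dilation v ≠ {1}} =
        (Finset.univ.filter (fun v : X.V => c.dilation v ≠ {1})).card := by
      rw [Set.ncard_eq_toFinset_card']
      congr 1
      ext v
      simp
    rw [hncard]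
    omega
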